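/- arXiv:2103.15926 — 5 statements merged into one kernel-verified Lean document; each statement's English description precedes it below -/
import Mathlib

section
/- Let e ≥ 1 and let i_1, j_1, …, i_e, j_e be indices such that for each row k, the index j_k occurs in row k and in no other row of the e × e matrix M with entries M_{k,c} = A_{i_k}^c − A_{j_k}^c for 1 ≤ c ≤ e, where the A's are distinct indeterminates. Then det M is a nonzero polynomial in the indeterminates A, of total degree at most e(e+1)/2. -/
open MvPolynomial

/-- The matrix with entries `A_{i_k}^c − A_{j_k}^c` (`1 ≤ c ≤ e`), where each `j_k`
occurs only in row `k`, has nonzero determinant of total degree at most `e(e+1)/2`. -/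
theorem det_difference_matrix_ne_zero {F : Type*} [Field F] {e : ℕ} (he : 1 ≤ e)
    (i j : Fin e → ℕ) (hj : Function.Injective j) (hij : ∀ k l : Fin e, j k ≠ i l) :
    let M : Matrix (Fin e) (Fin e) (MvPolynomial ℕ F) :=
      Matrix.of fun k c =>
        (X (i k) : MvPolynomial ℕ F) ^ ((c : ℕ) + 1) - (X (j k)) ^ ((c : ℕ) + 1)
    M.det ≠ 0 ∧ M.det.totalDegree ≤ e * (e + 1) / 2 := by
  intro M
  constructor
  · -- nonzero: substitute `X (j k) ↦ Y k` and all other variables to `0`.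
    classical
    set g : ℕ → MvPolynomial (Fin e) F := fun n =>
      if h : ∃ k, j k = n then X h.choose else 0 with hg
    set φ : MvPolynomial ℕ F →+* MvPolynomial (Fin e) F := (aeval g).toRingHom with hφ
    have hgj : ∀ k, g (j k) = X k := by
      intro k
      have h : ∃ k', j k' = j k := ⟨k, rfl⟩
      simp only [hg, dif_pos h]
      exact congrArg X (hj h.choose_spec)
    have hgi : ∀ k, g (i k) = 0 := by
      intro k
      have h : ¬ ∃ k', j k' = i k := by
        rintro ⟨k', hk'⟩; exact hij k' k hk'
      simp only [hg, dif_neg h]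
    have hmap : φ M.det = (M.map φ).det := RingHom.map_det φ M
    have hM : M.map φ = Matrix.of fun k c =>
        (-X k) * (Matrix.vandermonde (fun k : Fin e => (X k : MvPolynomial (Fin e) F))) k c := by
      ext k c
      simp only [Matrix.map_apply, Matrix.of_apply, Matrix.vandermonde_apply, hφ, M, map_sub,
        map_pow, AlgHom.toRingHom_eq_coe, RingHom.coe_coe, aeval_X, hgj, hgi]
      ring
    intro h0
    have : (M.map φ).det = 0 := by rw [← hmap, h0, map_zero]
    rw [hM, Matrix.det_mul_column] at this
    rw [Matrix.det_vandermonde] at this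
    have hne : (∏ k : Fin e, (-X k : MvPolynomial (Fin e) F)) *
        ∏ k : Fin e, ∏ l ∈ Finset.Ioi k,
          ((X l : MvPolynomial (Fin e) F) - X k) ≠ 0 := by
      apply mul_ne_zero
      · exact Finset.prod_ne_zero_iff.2 fun k _ => neg_ne_zero.2 (X_ne_zero k)
      · refine Finset.prod_ne_zero_iff.2 fun k _ => Finset.prod_ne_zero_iff.2 fun l hl => ?_
        have : k ≠ l := (Finset.mem_Ioi.1 hl).ne
        exact sub_ne_zero.2 fun h => this (X_injective h).symm
    exact hne this
  · -- degree bound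
    rw [Matrix.det_apply]
    refine (totalDegree_finset_sum _ _).trans (Finset.sup_le fun σ _ => ?_)
    have h1 : ((Equiv.Perm.sign σ : ℤˣ) • ∏ c, M (σ c) c).totalDegree
        = (∏ c, M (σ c) c).totalDegree := by
      rcases Int.units_eq_one_or (Equiv.Perm.sign σ) with h | h <;> rw [h]
      · rw [one_smul]
      · rw [Units.neg_smul, one_smul, totalDegree_neg]
    rw [h1]
    refine (totalDegree_finset_prod _ _).trans ?_
    have h2 : ∀ c : Fin e, (M (σ c) c).totalDegree ≤ (c : ℕ) + 1 := by
      intro c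
      have : M (σ c) c = (X (i (σ c)) : MvPolynomial ℕ F) ^ ((c : ℕ) + 1)
          + (-(X (j (σ c)) ^ ((c : ℕ) + 1))) := by simp [M, sub_eq_add_neg]
      rw [this]
      refine (totalDegree_add _ _).trans ?_
      rw [totalDegree_neg]
      simp [totalDegree_X_pow]
    refine (Finset.sum_le_sum fun c _ => h2 c).trans ?_
    have h3 : ∑ c : Fin e, ((c : ℕ) + 1) = e * (e + 1) / 2 := by
      rw [Fin.sum_univ_eq_sum_range (fun c => c + 1) e]
      have h4 : ∑ c ∈ Finset.range e, (c + 1) = ∑ c ∈ Finset.range (e + 1), c := by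
        rw [Finset.sum_range_succ' (fun c => c) e]; simp
      rw [h4, Finset.sum_range_id]
      simp [Nat.mul_comm]
    exact le_of_eq h3
end

section
/- There exists a nonzero polynomial Q^{(1)} ∈ F[A_1,…,A_{d+e−1}] of total degree less than e²·S₂(d+e−1, d−1) such that for every α ∈ F^{d+e−1} with Q^{(1)}(α) ≠ 0 and every monic original polynomial h = X^e + h_{e−1}X^{e−1} + ⋯ + h_1X ∈ F[X], the number of distinct values among h(α_1), …, h(α_{d+e−1}) is at least d. -/
/-- Stirling numbers of the second kind: the number of partitions of an
`n`-element set into exactly `m` blocks. -/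
def stirling2 : ℕ → ℕ → ℕ
  | 0, 0 => 1
  | 0, _ + 1 => 0
  | _ + 1, 0 => 0
  | n + 1, m + 1 => (m + 1) * stirling2 n (m + 1) + stirling2 n m

open MvPolynomial Polynomial

namespace GenAux

lemma stirling2_of_lt : ∀ {n m : ℕ}, n < m → stirling2 n m = 0
  | 0, _ + 1, _ => rfl
  | n + 1, m + 1, h => by
    rw [stirling2, stirling2_of_lt (by omega), stirling2_of_lt (by omega)]
    ring

lemma stirling2_self : ∀ n : ℕ, stirling2 n n = 1
  | 0 => rfl
  | n + 1 => by rw [stirling2, stirling2_self n, stirling2_of_lt (by omega)]; ring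

lemma stirling2_pos : ∀ {n m : ℕ}, 1 ≤ m → m ≤ n → 0 < stirling2 n m
  | 0, _, h1, h2 => by omega
  | n + 1, 0, h1, _ => by omega
  | n + 1, m + 1, _, hmn => by
    rw [stirling2]
    rcases eq_or_lt_of_le hmn with h | h
    · rw [show m = n by omega, stirling2_self]
      omega
    · have := stirling2_pos (m := m + 1) (n := n) (by omega) (by omega)
      positivity

open Finset

def parts : (n m : ℕ) → Finset (Fin n → ℕ)
  | 0, 0 => {fun _ => 0}
  | 0, _ + 1 => ∅
  | _ + 1, 0 => ∅
  | n + 1, m + 1 =>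
      ((Finset.range (m + 1)).biUnion fun v =>
        (parts n (m + 1)).image fun f => Fin.snoc f v) ∪
      (parts n m).image fun f => Fin.snoc f m

lemma parts_card : ∀ n m, (parts n m).card ≤ stirling2 n m
  | 0, 0 => le_of_eq (Finset.card_singleton _)
  | 0, m + 1 => by simp only [parts]; simp
  | n + 1, 0 => by simp only [parts]; simp
  | n + 1, m + 1 => by
    simp only [parts, stirling2]
    have h1 : ((Finset.range (m + 1)).biUnion fun v =>
        (parts n (m + 1)).image fun f => (Fin.snoc f v : Fin (n + 1) → ℕ)).card
          ≤ (m + 1) * stirling2 n (m + 1) := by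
      refine le_trans Finset.card_biUnion_le ?_
      have h2 : ∀ v ∈ Finset.range (m + 1),
          ((parts n (m + 1)).image fun f => (Fin.snoc f v : Fin (n + 1) → ℕ)).card
            ≤ stirling2 n (m + 1) :=
        fun v _ => le_trans Finset.card_image_le (parts_card n (m + 1))
      refine le_trans (Finset.sum_le_sum h2) ?_
      rw [Finset.sum_const, Finset.card_range, smul_eq_mul]
    have h3 : ((parts n m).image fun f => (Fin.snoc f m : Fin (n + 1) → ℕ)).card ≤ stirling2 n m :=
      le_trans Finset.card_image_le (parts_card n m)
    exact le_trans (Finset.card_union_le _ _) (Nat.add_le_add h1 h3)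

lemma image_snoc {n : ℕ} (f : Fin n → ℕ) (v : ℕ) :
    Finset.image (Fin.snoc f v : Fin (n + 1) → ℕ) Finset.univ
      = insert v (Finset.image f Finset.univ) := by
  rw [Fin.univ_castSuccEmb, Finset.cons_eq_insert, Finset.image_insert, Fin.snoc_last]
  congr 1
  rw [Finset.map_eq_image, Finset.image_image]
  refine Finset.image_congr fun i _ => ?_
  exact Fin.snoc_castSucc (α := fun _ => ℕ) v f i

lemma parts_image : ∀ n m, ∀ f ∈ parts n m,
    Finset.image f Finset.univ = Finset.range m
  | 0, 0, f, hf => by simp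
  | 0, m + 1, f, hf => by simp only [parts] at hf; simp at hf
  | n + 1, 0, f, hf => by simp only [parts] at hf; simp at hf
  | n + 1, m + 1, f, hf => by
    simp only [parts, Finset.mem_union, Finset.mem_biUnion, Finset.mem_image,
      Finset.mem_range] at hf
    rcases hf with ⟨v, hv, f', hf', rfl⟩ | ⟨f', hf', rfl⟩
    · rw [image_snoc, parts_image n (m + 1) f' hf', Finset.insert_eq_self.2]
      rwa [Finset.mem_range]
    · rw [image_snoc, parts_image n m f' hf', Finset.range_add_one]

lemma parts_complete {β : Type*} [DecidableEq β] :
    ∀ n m, m ≤ n → ∀ g : Fin n → β, (Finset.image g Finset.univ).card ≤ m →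
      ∃ f ∈ parts n m, ∀ i j, f i = f j → g i = g j
  | 0, m, hmn, g, hg => by
    interval_cases m
    exact ⟨fun _ => 0, Finset.mem_singleton_self _, fun i => i.elim0⟩
  | n + 1, m, hmn, g, hg => by
    have himgpos : 0 < (Finset.image g Finset.univ).card :=
      Finset.card_pos.2 ⟨g 0, Finset.mem_image_of_mem g (Finset.mem_univ 0)⟩
    rcases Nat.exists_eq_add_of_le (show 1 ≤ m by omega) with ⟨m', rfl⟩
    rw [Nat.add_comm 1 m'] at *
    set g' : Fin n → β := g ∘ Fin.castSucc with hg'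
    have hsub : Finset.image g' Finset.univ ⊆ Finset.image g Finset.univ := by
      intro x hx
      rw [Finset.mem_image] at hx ⊢
      obtain ⟨i, _, rfl⟩ := hx
      exact ⟨i.castSucc, Finset.mem_univ _, rfl⟩
    by_cases hc : (Finset.image g' Finset.univ).card ≤ m'
    · obtain ⟨f', hf', hr⟩ := parts_complete n m' (by omega) g' hc
      have hlt : ∀ i, f' i < m' := fun i => by
        have := parts_image n m' f' hf' ▸ Finset.mem_image_of_mem f' (Finset.mem_univ i)
        rwa [Finset.mem_range] at this
      refine ⟨(Fin.snoc f' m' : Fin (n + 1) → ℕ), ?_, ?_⟩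
      · simp only [parts, Finset.mem_union]
        exact Or.inr (Finset.mem_image_of_mem _ hf')
      · intro i j hij
        induction i using Fin.lastCases with
        | last =>
          induction j using Fin.lastCases with
          | last => rfl
          | cast j =>
            rw [Fin.snoc_last, Fin.snoc_castSucc] at hij
            exact absurd hij.symm (Nat.ne_of_lt (hlt j))
        | cast i =>
          induction j using Fin.lastCases with
          | last =>
            rw [Fin.snoc_last, Fin.snoc_castSucc] at hij
            exact absurd hij (Nat.ne_of_lt (hlt i))
          | cast j =>
            rw [Fin.snoc_castSucc, Fin.snoc_castSucc] at hij
            exact hr i j hij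
    · have hcard : (Finset.image g' Finset.univ).card = m' + 1 := by
        have := Finset.card_le_card hsub
        omega
      have himg : Finset.image g' Finset.univ = Finset.image g Finset.univ :=
        Finset.eq_of_subset_of_card_le hsub (by omega)
      have hm1n : m' + 1 ≤ n := by
        have := Finset.card_image_le (f := g') (s := (Finset.univ : Finset (Fin n)))
        simp only [Finset.card_univ, Fintype.card_fin] at this
        omega
      obtain ⟨f', hf', hr⟩ := parts_complete n (m' + 1) hm1n g' (le_of_eq hcard)
      have hlast : g (Fin.last n) ∈ Finset.image g' Finset.univ := by
        rw [himg]
        exact Finset.mem_image_of_mem g (Finset.mem_univ _)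
      rw [Finset.mem_image] at hlast
      obtain ⟨i₀, -, hi₀⟩ := hlast
      refine ⟨(Fin.snoc f' (f' i₀) : Fin (n + 1) → ℕ), ?_, ?_⟩
      · simp only [parts, Finset.mem_union]
        refine Or.inl (Finset.mem_biUnion.2 ⟨f' i₀, ?_, Finset.mem_image_of_mem _ hf'⟩)
        rw [Finset.mem_range]
        have := parts_image n (m' + 1) f' hf' ▸ Finset.mem_image_of_mem f' (Finset.mem_univ i₀)
        rwa [Finset.mem_range] at this
      · intro i j hij
        induction i using Fin.lastCases with
        | last =>
          induction j using Fin.lastCases with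
          | last => rfl
          | cast j =>
            rw [Fin.snoc_last, Fin.snoc_castSucc] at hij
            exact (hi₀ ▸ hr j i₀ hij.symm).symm
        | cast i =>
          induction j using Fin.lastCases with
          | last =>
            rw [Fin.snoc_last, Fin.snoc_castSucc] at hij
            exact hi₀ ▸ hr i i₀ hij
          | cast j =>
            rw [Fin.snoc_castSucc, Fin.snoc_castSucc] at hij
            exact hr i j hij

open MvPolynomial

def repsF {n : ℕ} (f : Fin n → ℕ) : Finset (Fin n) :=
  Finset.univ.filter fun i => ∀ j, j < i → f j ≠ f i

def nonrepsF {n : ℕ} (f : Fin n → ℕ) : Finset (Fin n) := Finset.univ \ repsF f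

def piF {n : ℕ} (f : Fin n → ℕ) (i : Fin n) : Fin n :=
  (Finset.univ.filter fun j => f j = f i).min' ⟨i, by simp⟩

lemma piF_spec {n : ℕ} (f : Fin n → ℕ) (i : Fin n) : f (piF f i) = f i := by
  have := (Finset.univ.filter fun j => f j = f i).min'_mem ⟨i, by simp⟩
  rw [Finset.mem_filter] at this
  exact this.2

lemma piF_mem_reps {n : ℕ} (f : Fin n → ℕ) (i : Fin n) : piF f i ∈ repsF f := by
  rw [repsF, Finset.mem_filter]
  refine ⟨Finset.mem_univ _, fun j hj hEq => ?_⟩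
  rw [piF_spec f i] at hEq
  have hjm : j ∈ Finset.univ.filter fun j => f j = f i := by
    rw [Finset.mem_filter]; exact ⟨Finset.mem_univ _, hEq⟩
  exact absurd (Finset.min'_le _ j hjm) (not_le.2 hj)

lemma repsF_card {n m : ℕ} (f : Fin n → ℕ)
    (himg : Finset.image f Finset.univ = Finset.range m) : (repsF f).card = m := by
  have hinj : Set.InjOn f (repsF f) := by
    intro i hi j hj hij
    simp only [repsF, Finset.coe_filter, Set.mem_setOf_eq] at hi hj
    rcases lt_trichotomy i j with h | h | h
    · exact absurd hij (hj.2 i h)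
    · exact h
    · exact absurd hij.symm (hi.2 j h)
  have himg2 : (repsF f).image f = Finset.image f Finset.univ := by
    apply Finset.Subset.antisymm
    · exact Finset.image_subset_image (Finset.filter_subset _ _)
    · intro v hv
      rw [Finset.mem_image] at hv
      obtain ⟨i, -, rfl⟩ := hv
      refine Finset.mem_image.2 ⟨piF f i, piF_mem_reps f i, piF_spec f i⟩
  rw [← Finset.card_image_of_injOn hinj, himg2, himg, Finset.card_range]

lemma nonrepsF_card {n m : ℕ} (f : Fin n → ℕ)
    (himg : Finset.image f Finset.univ = Finset.range m) :
    (nonrepsF f).card = n - m := by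
  rw [nonrepsF, Finset.card_sdiff_of_subset (Finset.subset_univ _), repsF_card f himg]
  simp

variable {F : Type*} [Field F]

noncomputable def matQ (F : Type*) [Field F] {n e : ℕ} (f : Fin n → ℕ)
    (hc : (nonrepsF f).card = e) : Matrix (Fin e) (Fin e) (MvPolynomial (Fin n) F) :=
  fun r k => MvPolynomial.X ((nonrepsF f).orderEmbOfFin hc r) ^ ((k : ℕ) + 1)
    - MvPolynomial.X (piF f ((nonrepsF f).orderEmbOfFin hc r)) ^ ((k : ℕ) + 1)

lemma matQ_det_ne_zero {n e : ℕ} (f : Fin n → ℕ) (hc : (nonrepsF f).card = e) :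
    (matQ F f hc).det ≠ 0 := by
  classical
  set β : Fin n → Polynomial F := fun i =>
    if h : i ∈ nonrepsF f
    then (Polynomial.X : Polynomial F) ^ ((((nonrepsF f).orderIsoOfFin hc).symm ⟨i, h⟩ : Fin e) + 1 : ℕ)
    else 0 with hβ
  set φ : MvPolynomial (Fin n) F →+* Polynomial F := (MvPolynomial.aeval β).toRingHom with hφ
  intro hdet
  have h0 : φ (matQ F f hc).det = 0 := by rw [hdet]; exact map_zero φ
  rw [RingHom.map_det] at h0
  set t : Fin e → Polynomial F := fun r => (Polynomial.X : Polynomial F) ^ ((r : ℕ) + 1) with ht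
  have hN : φ.mapMatrix (matQ F f hc) = Matrix.diagonal t * Matrix.vandermonde t := by
    ext r k
    have hmem : (nonrepsF f).orderEmbOfFin hc r ∈ nonrepsF f :=
      Finset.orderEmbOfFin_mem _ hc r
    have hrep : piF f ((nonrepsF f).orderEmbOfFin hc r) ∉ nonrepsF f := by
      simp only [nonrepsF, Finset.mem_sdiff]
      push_neg
      intro _
      exact piF_mem_reps f _
    have hβ1 : β ((nonrepsF f).orderEmbOfFin hc r) = (Polynomial.X : Polynomial F) ^ ((r : ℕ) + 1) := by
      rw [hβ]
      simp only [dif_pos hmem]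
      congr 2
      have : (⟨(nonrepsF f).orderEmbOfFin hc r, hmem⟩ : {x // x ∈ nonrepsF f})
          = (nonrepsF f).orderIsoOfFin hc r :=
        Subtype.ext (Finset.coe_orderIsoOfFin_apply (nonrepsF f) hc r).symm
      rw [this, OrderIso.symm_apply_apply]
    have hβ2 : β (piF f ((nonrepsF f).orderEmbOfFin hc r)) = 0 := by
      rw [hβ]; exact dif_neg hrep
    simp only [RingHom.mapMatrix_apply, Matrix.map_apply, matQ, map_sub, map_pow, hφ,
      AlgHom.toRingHom_eq_coe, RingHom.coe_coe, MvPolynomial.aeval_X, hβ1, hβ2,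
      Matrix.diagonal_mul, Matrix.vandermonde_apply]
    rw [zero_pow (Nat.succ_ne_zero _), sub_zero, ht]
    ring_nf
  rw [hN, Matrix.det_mul, Matrix.det_diagonal, Matrix.det_vandermonde] at h0
  rcases mul_eq_zero.1 h0 with h1 | h1
  · rw [Finset.prod_eq_zero_iff] at h1
    obtain ⟨r, -, hr⟩ := h1
    exact pow_ne_zero _ Polynomial.X_ne_zero hr
  · rw [Finset.prod_eq_zero_iff] at h1
    obtain ⟨i, -, hi⟩ := h1
    rw [Finset.prod_eq_zero_iff] at hi
    obtain ⟨j, hj, hij⟩ := hi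
    rw [Finset.mem_Ioi] at hj
    rw [sub_eq_zero, ht] at hij
    have := congrArg Polynomial.natDegree hij
    rw [Polynomial.natDegree_X_pow, Polynomial.natDegree_X_pow] at this
    omega

lemma matQ_det_eval_eq_zero {n e : ℕ} (he : 1 ≤ e) (f : Fin n → ℕ)
    (hc : (nonrepsF f).card = e) (α : Fin n → F) (h : Polynomial F)
    (hmon : h.Monic) (hdeg : h.natDegree = e)
    (href : ∀ i j, f i = f j → h.eval (α i) = h.eval (α j)) :
    MvPolynomial.eval α (matQ F f hc).det = 0 := by
  classical
  rw [RingHom.map_det]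
  set N := (MvPolynomial.eval α).mapMatrix (matQ F f hc) with hNdef
  rw [← Matrix.exists_mulVec_eq_zero_iff]
  refine ⟨fun k => h.coeff ((k : ℕ) + 1), ?_, ?_⟩
  · intro hw
    have := congrFun hw ⟨e - 1, by omega⟩
    simp only [Pi.zero_apply] at this
    rw [show (((⟨e - 1, by omega⟩ : Fin e) : ℕ) + 1) = e by simp; omega] at this
    rw [← hdeg, hmon.coeff_natDegree] at this
    exact one_ne_zero this
  · funext r
    set a := (nonrepsF f).orderEmbOfFin hc r with ha
    have key : ∀ x y : F, ∑ k : Fin e, (x ^ ((k : ℕ) + 1) - y ^ ((k : ℕ) + 1)) * h.coeff ((k : ℕ) + 1)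
        = h.eval x - h.eval y := by
      intro x y
      rw [Fin.sum_univ_eq_sum_range (fun k => (x ^ (k + 1) - y ^ (k + 1)) * h.coeff (k + 1)) e]
      have hx := Polynomial.eval_eq_sum_range (p := h) x
      have hy := Polynomial.eval_eq_sum_range (p := h) y
      rw [hdeg] at hx hy
      rw [hx, hy, ← Finset.sum_sub_distrib, Finset.sum_range_succ']
      simp only [pow_zero, mul_one, sub_self, add_zero]
      exact Finset.sum_congr rfl fun i _ => by ring
    have hval : h.eval (α a) = h.eval (α (piF f a)) :=
      (href _ _ (piF_spec f a).symm)
    simp only [Matrix.mulVec, dotProduct, hNdef, RingHom.mapMatrix_apply,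
      Matrix.map_apply, matQ, map_sub, map_pow, MvPolynomial.eval_X, Pi.zero_apply, ← ha]
    rw [key (α a) (α (piF f a)), hval, sub_self]

lemma matQ_det_totalDegree {n e : ℕ} (he : 2 ≤ e) [Nontrivial F] (f : Fin n → ℕ)
    (hc : (nonrepsF f).card = e) :
    (matQ F f hc).det.totalDegree ≤ e ^ 2 - 1 := by
  rw [Matrix.det_apply']
  refine le_trans (MvPolynomial.totalDegree_finset_sum _ _) ?_
  rw [Finset.sup_le_iff]
  intro σ _
  refine le_trans (MvPolynomial.totalDegree_mul _ _) ?_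
  have hsign : ((Equiv.Perm.sign σ : ℤ) : MvPolynomial (Fin n) F).totalDegree = 0 := by
    rw [← map_intCast (MvPolynomial.C : F →+* MvPolynomial (Fin n) F)]
    exact MvPolynomial.totalDegree_C _
  rw [hsign, zero_add]
  refine le_trans (MvPolynomial.totalDegree_finset_prod _ _) ?_
  have hentry : ∀ k : Fin e, (matQ F f hc (σ k) k).totalDegree ≤ (k : ℕ) + 1 := by
    intro k
    rw [matQ, sub_eq_add_neg]
    refine le_trans (MvPolynomial.totalDegree_add _ _) ?_
    rw [MvPolynomial.totalDegree_neg, MvPolynomial.totalDegree_X_pow,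
      MvPolynomial.totalDegree_X_pow]
    simp
  refine le_trans (Finset.sum_le_sum fun k _ => hentry k) ?_
  rw [Fin.sum_univ_eq_sum_range (fun k => k + 1) e]
  obtain ⟨e', rfl⟩ : ∃ e', e = e' + 2 := ⟨e - 2, by omega⟩
  have hS : (∑ i ∈ Finset.range (e' + 2), i) * 2 = (e' + 2) * (e' + 2 - 1) :=
    Finset.sum_range_id_mul_two (e' + 2)
  rw [Finset.sum_add_distrib, Finset.sum_const, Finset.card_range, smul_eq_mul, mul_one]
  have h3 : e' + 2 - 1 = e' + 1 := by omega
  rw [h3] at hS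
  have h1 : (e' + 2) * (e' + 1) = e' * e' + 3 * e' + 2 := by ring
  rw [h1] at hS
  have h2 : (e' + 2) ^ 2 = e' * e' + 4 * e' + 4 := by ring
  set S := ∑ i ∈ Finset.range (e' + 2), i
  set a := e' * e'
  omega


end GenAux

open GenAux in
/-- There is a nonzero polynomial `Q⁽¹⁾` of total degree `< e² S₂(d+e−1, d−1)` such
that whenever `Q⁽¹⁾(α) ≠ 0`, every monic original polynomial `h` of degree `e`
takes at least `d` distinct values on the coordinates of `α`. -/
theorem exists_genericity_poly_card_values {F : Type*} [Field F] [DecidableEq F]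
    (d e : ℕ) (hd : 2 ≤ d) (he : 2 ≤ e) :
    ∃ Q : MvPolynomial (Fin (d + e - 1)) F,
      Q ≠ 0 ∧
      Q.totalDegree < e ^ 2 * stirling2 (d + e - 1) (d - 1) ∧
      ∀ α : Fin (d + e - 1) → F, MvPolynomial.eval α Q ≠ 0 →
        ∀ h : Polynomial F, h.Monic → h.natDegree = e → h.coeff 0 = 0 →
          d ≤ (Finset.univ.image fun i => h.eval (α i)).card := by
  classical
  set n := d + e - 1 with hn
  have hcf : ∀ f ∈ parts n (d - 1), (nonrepsF f).card = e := by
    intro f hf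
    rw [nonrepsF_card f (parts_image n (d - 1) f hf)]
    omega
  refine ⟨∏ f ∈ (parts n (d - 1)).attach,
    (matQ F f.1 (hcf f.1 f.2)).det, ?_, ?_, ?_⟩
  · rw [Finset.prod_ne_zero_iff]
    exact fun f _ => matQ_det_ne_zero f.1 (hcf f.1 f.2)
  · refine lt_of_le_of_lt (MvPolynomial.totalDegree_finset_prod _ _) ?_
    have hbound := fun (f : {x // x ∈ parts n (d - 1)}) =>
      matQ_det_totalDegree (F := F) he f.1 (hcf f.1 f.2)
    refine lt_of_le_of_lt (Finset.sum_le_sum fun f _ => hbound f) ?_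
    rw [Finset.sum_const, Finset.card_attach, smul_eq_mul]
    have hcard := parts_card n (d - 1)
    have hpos : 0 < stirling2 n (d - 1) := stirling2_pos (by omega) (by omega)
    have he2 : 4 ≤ e ^ 2 := by
      calc 4 = 2 * 2 := rfl
      _ ≤ e * e := Nat.mul_le_mul he he
      _ = e ^ 2 := (sq e).symm
    calc (parts n (d - 1)).card * (e ^ 2 - 1)
        ≤ stirling2 n (d - 1) * (e ^ 2 - 1) := Nat.mul_le_mul_right _ hcard
      _ < stirling2 n (d - 1) * e ^ 2 := by
          exact mul_lt_mul_of_pos_left (by omega) hpos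
      _ = e ^ 2 * stirling2 n (d - 1) := mul_comm _ _
  · intro α hQ h hmon hdeg _
    by_contra hcon
    push_neg at hcon
    obtain ⟨f, hf, href⟩ := parts_complete n (d - 1) (by omega)
      (fun i => h.eval (α i)) (by omega)
    apply hQ
    rw [map_prod]
    exact Finset.prod_eq_zero (Finset.mem_attach _ ⟨f, hf⟩)
      (matQ_det_eval_eq_zero (by omega) f (hcf f hf) α h hmon hdeg href)
end

section
/- There exists a nonzero polynomial R^{(2)} ∈ F[A_1,…,A_{d+e−1}] of total degree less than e²(S₂(d+e−1,d−1) + S₂(d+e−1,d)) such that for every α ∈ F^{d+e−1} with R^{(2)}(α) ≠ 0: (a) the set C_α = {h = X^e + h_{e−1}X^{e−1} + ⋯ + h_1X ∈ F[X] : #h(α) ≤ d} has exactly S₂(d+e−1, d) elements; (b) every h ∈ C_α satisfies #h(α) = d; (c) the coordinates α_1, …, α_{d+e−1} are pairwise distinct. -/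
open MvPolynomial Polynomial

/-!
For a partition of the `N = d + e - 1` indices into `k` blocks, the condition that
`h = X ^ e + h_{e-1} X ^ (e-1) + ⋯ + h_1 X` be constant on the blocks along `α` is the linear
system `h (α i) = h (α j)`, where `i` runs over the `N - k` indices that are not the first `j`
of their block. Its matrix has rows `(α_i ^ (c + 1) - α_j ^ (c + 1))_c`; sending the variables
of the first indices to `0` turns its determinant into a monomial times a Vandermonde
determinant, so as a polynomial in `α` it is nonzero. `R⁽²⁾` is the Vandermonde determinant
times these determinants over all partitions into `d` blocks (`e - 1` unknowns) and into
`d - 1` blocks (`e` unknowns once the leading coefficient is treated as one of them).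

Away from `R⁽²⁾ = 0`, no admissible `h` takes fewer than `d` values: its value partition refines
to one with `d - 1` blocks, whose homogeneous system has only the zero solution, which is not
monic. Each partition into `d` blocks carries exactly one `h`, whose value partition it then
is. Encoding partitions by restricted growth strings gives the count `S₂(N, d)`.
-/

open Finset Function

section Kernel

variable {α β γ : Type*} [Fintype α] [DecidableEq β] [DecidableEq γ] {f : α → γ} {v : α → β}

lemma card_image_prod_eq_of_setoidKer_le (h : Setoid.ker f ≤ Setoid.ker v) :
    #(univ.image fun a => (f a, v a)) = #(univ.image f) := by
  have : univ.image f = (univ.image fun a => (f a, v a)).image Prod.fst := by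
    rw [image_image]; rfl
  rw [this]
  refine (card_image_of_injOn ?_).symm
  rintro _ hx _ hy hxy
  obtain ⟨a, -, rfl⟩ := mem_image.1 hx
  obtain ⟨b, -, rfl⟩ := mem_image.1 hy
  exact Prod.ext hxy (h hxy)

lemma card_image_le_of_setoidKer_le (h : Setoid.ker f ≤ Setoid.ker v) :
    #(univ.image v) ≤ #(univ.image f) := by
  rw [← card_image_prod_eq_of_setoidKer_le h]
  calc #(univ.image v) = #((univ.image fun a => (f a, v a)).image Prod.snd) := by
        rw [image_image]; rfl
    _ ≤ _ := card_image_le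

lemma setoidKer_eq_of_le_of_card_image_eq (h : Setoid.ker f ≤ Setoid.ker v)
    (hcard : #(univ.image v) = #(univ.image f)) : Setoid.ker f = Setoid.ker v := by
  refine le_antisymm h fun a b hab => ?_
  have hinj : Set.InjOn Prod.snd (↑(univ.image fun a => (f a, v a)) : Set (γ × β)) := by
    apply injOn_of_card_image_eq
    rw [image_image, card_image_prod_eq_of_setoidKer_le h, ← hcard]
    rfl
  exact congrArg Prod.fst
    (hinj (mem_image_of_mem _ (mem_univ a)) (mem_image_of_mem _ (mem_univ b)) hab)

end Kernel

section RestrictedGrowth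

variable {n k : ℕ} {β : Type*}

lemma image_univ_snoc [DecidableEq β] (w : Fin n → β) (b : β) :
    univ.image (Fin.snoc (α := fun _ => β) w b) = insert b (univ.image w) := by
  ext c
  simp [Fin.exists_fin_succ', or_comm, eq_comm]

lemma setoidKer_snoc {γ : Type*} {f : Fin n → γ} {v : Fin n → β} {a : γ} {b : β}
    (h : Setoid.ker f = Setoid.ker v) (hab : ∀ j, f j = a ↔ v j = b) :
    Setoid.ker (Fin.snoc (α := fun _ => γ) f a) =
      Setoid.ker (Fin.snoc (α := fun _ => β) v b) := by
  ext i j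
  induction i using Fin.lastCases <;> induction j using Fin.lastCases <;>
    simp only [Setoid.ker_def, Fin.snoc_castSucc, Fin.snoc_last]
  all_goals first | exact Setoid.ext_iff.1 h _ _ | simpa [eq_comm] using hab _

/-- Restricted growth strings: the labellings of `Fin n` by `0, …, k - 1` in which the labels
appear in increasing order of first occurrence. They are the canonical encodings of the
partitions of `Fin n` into `k` blocks. -/
def restrictedGrowth : (n k : ℕ) → Finset (Fin n → ℕ)
  | 0, 0 => {Fin.elim0}
  | 0, _ + 1 => ∅
  | _ + 1, 0 => ∅
  | n + 1, k + 1 =>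
      (restrictedGrowth n (k + 1) ×ˢ range (k + 1)).image (fun p => Fin.snoc p.1 p.2) ∪
        (restrictedGrowth n k).image (fun f => Fin.snoc f k)

lemma mem_restrictedGrowth_succ_succ {f : Fin (n + 1) → ℕ} :
    f ∈ restrictedGrowth (n + 1) (k + 1) ↔
      (Fin.init f ∈ restrictedGrowth n (k + 1) ∧ f (Fin.last n) < k + 1) ∨
        (Fin.init f ∈ restrictedGrowth n k ∧ f (Fin.last n) = k) := by
  simp only [restrictedGrowth, mem_union, mem_image, mem_product, mem_range, Prod.exists]
  constructor
  · rintro (⟨g, a, ⟨hg, ha⟩, rfl⟩ | ⟨g, hg, rfl⟩)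
    · simp [hg, ha]
    · simp [hg]
  · rintro (⟨hg, ha⟩ | ⟨hg, ha⟩)
    · exact Or.inl ⟨_, _, ⟨hg, ha⟩, Fin.snoc_init_self f⟩
    · exact Or.inr ⟨_, hg, ha ▸ Fin.snoc_init_self f⟩

lemma exists_mem_restrictedGrowth_init {f : Fin (n + 1) → ℕ}
    (hf : f ∈ restrictedGrowth (n + 1) k) : ∃ k', Fin.init f ∈ restrictedGrowth n k' := by
  cases k with
  | zero => simp [restrictedGrowth] at hf
  | succ k => rcases mem_restrictedGrowth_succ_succ.1 hf with h | h <;> exact ⟨_, h.1⟩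

lemma image_univ_of_mem_restrictedGrowth :
    ∀ {n k : ℕ} {f : Fin n → ℕ}, f ∈ restrictedGrowth n k → univ.image f = range k
  | 0, 0, _, _ => by simp
  | 0, _ + 1, _, h => by simp [restrictedGrowth] at h
  | _ + 1, 0, _, h => by simp [restrictedGrowth] at h
  | n + 1, k + 1, f, h => by
    rw [← Fin.snoc_init_self f, image_univ_snoc]
    rcases mem_restrictedGrowth_succ_succ.1 h with ⟨hi, hl⟩ | ⟨hi, hl⟩
    · rw [image_univ_of_mem_restrictedGrowth hi, insert_eq_of_mem (mem_range.2 hl)]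
    · rw [image_univ_of_mem_restrictedGrowth hi, hl, range_add_one]

lemma lt_of_mem_restrictedGrowth {f : Fin n → ℕ} (hf : f ∈ restrictedGrowth n k) (i : Fin n) :
    f i < k := by
  rw [← mem_range, ← image_univ_of_mem_restrictedGrowth hf]
  exact mem_image_of_mem f (mem_univ i)

theorem card_restrictedGrowth : ∀ n k, #(restrictedGrowth n k) = stirling2 n k
  | 0, 0 => rfl
  | 0, _ + 1 => rfl
  | _ + 1, 0 => rfl
  | n + 1, k + 1 => by
    have hsnoc : Injective2 (Fin.snoc (α := fun _ : Fin (n + 1) => ℕ)) := Fin.snoc_injective2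
    have hsnoc' : Injective fun p : (Fin n → ℕ) × ℕ => (Fin.snoc p.1 p.2 : Fin (n + 1) → ℕ) :=
      hsnoc.uncurry
    rw [restrictedGrowth, card_union_of_disjoint, card_image_of_injective _ hsnoc',
      card_image_of_injective _ (hsnoc.left (k : ℕ)), card_product, card_range,
      card_restrictedGrowth n (k + 1), card_restrictedGrowth n k, stirling2, mul_comm]
    rw [disjoint_left]
    rintro _ h₁ h₂
    obtain ⟨⟨g, a⟩, hg, rfl⟩ := mem_image.1 h₁
    obtain ⟨g', hg', he⟩ := mem_image.1 h₂
    obtain ⟨rfl, -⟩ := hsnoc he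
    have := (image_univ_of_mem_restrictedGrowth (mem_product.1 hg).1).symm.trans
      (image_univ_of_mem_restrictedGrowth hg')
    simpa using congrArg card this

lemma last_eq_card_image_init_of_mem_restrictedGrowth {f : Fin (n + 1) → ℕ}
    (hf : f ∈ restrictedGrowth (n + 1) k) (hfresh : ∀ j : Fin n, f (Fin.last n) ≠ f j.castSucc) :
    f (Fin.last n) = #(univ.image (Fin.init f)) := by
  cases k with
  | zero => simp [restrictedGrowth] at hf
  | succ k =>
    rcases mem_restrictedGrowth_succ_succ.1 hf with ⟨hi, hl⟩ | ⟨hi, hl⟩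
    · rw [← mem_range, ← image_univ_of_mem_restrictedGrowth hi] at hl
      obtain ⟨j, -, hj⟩ := mem_image.1 hl
      exact absurd hj.symm (hfresh j)
    · rw [image_univ_of_mem_restrictedGrowth hi, card_range, hl]

theorem exists_mem_restrictedGrowth_setoidKer_eq [DecidableEq β] :
    ∀ {n : ℕ} (v : Fin n → β),
      ∃ f ∈ restrictedGrowth n #(univ.image v), Setoid.ker f = Setoid.ker v
  | 0, v => ⟨Fin.elim0, by simp [restrictedGrowth], Setoid.ext fun i => i.elim0⟩
  | n + 1, v => by
    obtain ⟨w, b, rfl⟩ : ∃ w b, v = Fin.snoc w b := ⟨_, _, (Fin.snoc_init_self v).symm⟩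
    obtain ⟨g, hg, hker⟩ := exists_mem_restrictedGrowth_setoidKer_eq w
    rw [image_univ_snoc]
    by_cases hold : b ∈ univ.image w
    · obtain ⟨j, -, rfl⟩ := mem_image.1 hold
      obtain ⟨k, hk⟩ := Nat.exists_eq_add_one_of_ne_zero (card_ne_zero_of_mem hold)
      refine ⟨Fin.snoc g (g j), ?_, setoidKer_snoc hker fun i => Setoid.ext_iff.1 hker i j⟩
      rw [insert_eq_of_mem hold, hk, mem_restrictedGrowth_succ_succ, Fin.init_snoc,
        Fin.snoc_last, ← hk]
      exact Or.inl ⟨hg, hk ▸ lt_of_mem_restrictedGrowth hg j⟩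
    · refine ⟨Fin.snoc g #(univ.image w), ?_, setoidKer_snoc hker fun i => ?_⟩
      · rw [card_insert_of_notMem hold, mem_restrictedGrowth_succ_succ, Fin.init_snoc,
          Fin.snoc_last]
        exact Or.inr ⟨hg, rfl⟩
      · exact iff_of_false (lt_of_mem_restrictedGrowth hg i).ne
          fun h => hold (h ▸ mem_image_of_mem w (mem_univ i))

theorem eq_of_setoidKer_eq_of_mem_restrictedGrowth :
    ∀ {n k l : ℕ} {f g : Fin n → ℕ}, f ∈ restrictedGrowth n k →
      g ∈ restrictedGrowth n l → Setoid.ker f = Setoid.ker g → f = g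
  | 0, _, _, _, _, _, _, _ => funext fun i => i.elim0
  | n + 1, k, l, f, g, hf, hg, hker => by
    obtain ⟨k', hf'⟩ := exists_mem_restrictedGrowth_init hf
    obtain ⟨l', hg'⟩ := exists_mem_restrictedGrowth_init hg
    have hker' : ∀ i j, f i = f j ↔ g i = g j := fun i j => Setoid.ext_iff.1 hker i j
    have hinit : Fin.init f = Fin.init g :=
      eq_of_setoidKer_eq_of_mem_restrictedGrowth hf' hg'
        (Setoid.ext fun i j => hker' i.castSucc j.castSucc)
    rw [← Fin.snoc_init_self f, ← Fin.snoc_init_self g, hinit]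
    congr 1
    by_cases hold : ∃ j : Fin n, f (Fin.last n) = f j.castSucc
    · obtain ⟨j, hj⟩ := hold
      rw [hj, (hker' _ _).1 hj]
      exact congrFun hinit j
    · push Not at hold
      rw [last_eq_card_image_init_of_mem_restrictedGrowth hf hold, hinit,
        last_eq_card_image_init_of_mem_restrictedGrowth hg fun j h => hold j ((hker' _ _).2 h)]

theorem exists_mem_restrictedGrowth_setoidKer_le [DecidableEq β] (v : Fin n → β)
    (hv : #(univ.image v) ≤ k) (hk : k ≤ n) :
    ∃ f ∈ restrictedGrowth n k, Setoid.ker f ≤ Setoid.ker v := by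
  obtain ⟨m, rfl⟩ := Nat.exists_eq_add_of_le hv
  induction m generalizing β with
  | zero =>
    obtain ⟨f, hf, hker⟩ := exists_mem_restrictedGrowth_setoidKer_eq v
    exact ⟨f, hf, hker.le⟩
  | succ m ih =>
    have hninj : ¬ Injective v := fun hinj => by
      rw [card_image_of_injective _ hinj, card_univ, Fintype.card_fin] at hk
      omega
    obtain ⟨i, j, hij, hne⟩ := not_injective_iff.1 hninj
    -- split off `i` from its block, which also contains `j`
    set v' : Fin n → β × Bool := fun l => (v l, decide (l = i))
    have himage : univ.image v' = insert (v i, true) ((univ.image v).image (·, false)) := by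
      ext ⟨b, t⟩
      cases t
      · simp only [v', mem_image, mem_univ, Prod.mk.injEq, decide_eq_false_iff_not, true_and,
          mem_insert, Bool.false_eq_true, and_false, and_true, exists_eq_right, false_or]
        refine ⟨fun ⟨l, hl, _⟩ => ⟨l, hl⟩, fun ⟨l, hl⟩ => ?_⟩
        by_cases hli : l = i
        · subst hli
          exact ⟨j, hij ▸ hl, Ne.symm hne⟩
        · exact ⟨l, hl, hli⟩
      · simp [v', eq_comm]
    have hcard : #(univ.image v') = #(univ.image v) + 1 := by
      rw [himage, card_insert_of_notMem (by simp),
        card_image_of_injective _ (Prod.mk_left_injective false)]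
    obtain ⟨f, hf, hker⟩ := ih v' (by omega) (by omega)
    exact ⟨f, by rwa [hcard, add_right_comm] at hf, hker.trans fun _ _ h => congrArg Prod.fst h⟩

theorem finite_and_ncard_eq_stirling2_of_existsUnique {X : Type*} [DecidableEq β] {d : ℕ}
    (H : Set X) (v : X → Fin n → β) (hlow : ∀ x ∈ H, d ≤ #(univ.image (v x)))
    (huniq : ∀ f ∈ restrictedGrowth n d, ∃! x, x ∈ H ∧ Setoid.ker f ≤ Setoid.ker (v x)) :
    {x | x ∈ H ∧ #(univ.image (v x)) ≤ d}.Finite ∧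
      {x | x ∈ H ∧ #(univ.image (v x)) ≤ d}.ncard = stirling2 n d := by
  choose! ψ hψ hψker using fun x => exists_mem_restrictedGrowth_setoidKer_eq (v x)
  have hcard : ∀ x ∈ H, #(univ.image (v x)) ≤ d → #(univ.image (v x)) = d :=
    fun x hx hle => le_antisymm hle (hlow x hx)
  have hbij : Set.BijOn ψ {x | x ∈ H ∧ #(univ.image (v x)) ≤ d} (restrictedGrowth n d) := by
    refine ⟨fun x hx => ?_, fun x hx y hy hxy => ?_, fun f hf => ?_⟩
    · simpa [hcard x hx.1 hx.2] using hψ x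
    · have hf : ψ x ∈ restrictedGrowth n d := by simpa [hcard x hx.1 hx.2] using hψ x
      exact (huniq _ hf).unique ⟨hx.1, (hψker x).le⟩ ⟨hy.1, hxy ▸ (hψker y).le⟩
    · obtain ⟨x, ⟨hxH, hle⟩, -⟩ := huniq f hf
      have himage : #(univ.image f) = d := by
        rw [image_univ_of_mem_restrictedGrowth hf, card_range]
      have hxd : #(univ.image (v x)) = d :=
        hcard x hxH (himage ▸ card_image_le_of_setoidKer_le hle)
      refine ⟨x, ⟨hxH, hxd.le⟩, eq_of_setoidKer_eq_of_mem_restrictedGrowth (hψ x) hf ?_⟩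
      rw [hψker, setoidKer_eq_of_le_of_card_image_eq hle (hxd.trans himage.symm)]
  refine ⟨hbij.finite_iff_finite.2 (restrictedGrowth n d).finite_toSet, ?_⟩
  rw [← hbij.injOn.ncard_image, hbij.image_eq, Set.ncard_coe_finset, card_restrictedGrowth]

end RestrictedGrowth

lemma stirling2_eq_stirlingSecond : ∀ n k, stirling2 n k = Nat.stirlingSecond n k
  | 0, 0 => rfl
  | 0, _ + 1 => rfl
  | _ + 1, 0 => rfl
  | n + 1, k + 1 => by
    rw [stirling2, Nat.stirlingSecond_succ_succ, stirling2_eq_stirlingSecond n (k + 1),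
      stirling2_eq_stirlingSecond n k]

lemma mul_pred_le_two_mul_stirling2 {n k : ℕ} (hk : 2 ≤ k) (hkn : k < n) :
    n * (n - 1) ≤ 2 * stirling2 n k := by
  rw [stirling2_eq_stirlingSecond]
  induction n, hkn using Nat.le_induction with
  | base =>
    rw [Nat.stirlingSecond_succ_self_left, Nat.choose_two_right,
      Nat.mul_div_cancel' (Nat.even_mul_pred_self _).two_dvd]
  | succ n hn ih =>
    rw [Nat.stirlingSecond_succ_left _ _ (by omega)]
    obtain ⟨m, rfl⟩ : ∃ m, n = m + 1 := ⟨n - 1, by omega⟩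
    simp only [Nat.add_sub_cancel] at ih ⊢
    nlinarith

lemma two_mul_sum_fin_val (m : ℕ) : 2 * ∑ c : Fin m, (c : ℕ) = m * (m - 1) := by
  rw [Fin.sum_univ_eq_sum_range (fun c => c) m, mul_comm, sum_range_id_mul_two]

section FirstIndex

variable {n : ℕ} {γ : Type*} [DecidableEq γ] (f : Fin n → γ)

def firstIndex (i : Fin n) : Fin n :=
  (univ.filter fun j => f j = f i).min' ⟨i, by simp⟩

lemma apply_firstIndex (i : Fin n) : f (firstIndex f i) = f i :=
  (mem_filter.1 ((univ.filter fun j => f j = f i).min'_mem ⟨i, by simp⟩)).2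

variable {f} in
lemma firstIndex_congr {i j : Fin n} (h : f i = f j) : firstIndex f i = firstIndex f j := by
  simp only [firstIndex, h]

lemma firstIndex_firstIndex (i : Fin n) : firstIndex f (firstIndex f i) = firstIndex f i :=
  firstIndex_congr (apply_firstIndex f i)

def nonFirst : Finset (Fin n) := univ.filter fun i => firstIndex f i ≠ i

lemma card_nonFirst : #(nonFirst f) = n - #(univ.image f) := by
  have hfirst : #(univ.filter fun i => firstIndex f i = i) = #(univ.image f) := by
    refine card_bij (fun i _ => f i) (fun i _ => mem_image_of_mem f (mem_univ i)) ?_ ?_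
    · intro i hi j hj hij
      rw [← (mem_filter.1 hi).2, ← (mem_filter.1 hj).2]
      exact firstIndex_congr hij
    · intro b hb
      obtain ⟨i, -, rfl⟩ := mem_image.1 hb
      exact ⟨firstIndex f i, by simp [firstIndex_firstIndex], apply_firstIndex f i⟩
  have := card_filter_add_card_filter_not (s := univ) (p := fun i => firstIndex f i = i)
  rw [card_univ, Fintype.card_fin, hfirst] at this
  rw [nonFirst]
  simp only [ne_eq]
  omega

lemma card_nonFirst_of_mem_restrictedGrowth {k : ℕ} {f : Fin n → ℕ}
    (hf : f ∈ restrictedGrowth n k) : #(nonFirst f) = n - k := by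
  rw [card_nonFirst, image_univ_of_mem_restrictedGrowth hf, card_range]

def nonFirstEmb : Fin #(nonFirst f) ↪o Fin n := (nonFirst f).orderEmbOfFin rfl

lemma firstIndex_nonFirstEmb_ne (r s : Fin #(nonFirst f)) :
    firstIndex f (nonFirstEmb f r) ≠ nonFirstEmb f s := by
  intro h
  have hs := mem_filter.1 ((nonFirst f).orderEmbOfFin_mem rfl s)
  exact hs.2 (by rw [nonFirstEmb] at h; rw [← h, firstIndex_firstIndex])

lemma setoidKer_le_iff_forall_nonFirstEmb {β : Type*} {v : Fin n → β} :
    Setoid.ker f ≤ Setoid.ker v ↔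
      ∀ r, v (nonFirstEmb f r) = v (firstIndex f (nonFirstEmb f r)) := by
  refine ⟨fun h r => h (apply_firstIndex f _).symm, fun h => ?_⟩
  have hfirst : ∀ i, v i = v (firstIndex f i) := by
    intro i
    by_cases hi : firstIndex f i = i
    · rw [hi]
    · have : i ∈ Set.range (nonFirstEmb f) := by
        rw [nonFirstEmb, range_orderEmbOfFin]
        simpa [nonFirst] using hi
      obtain ⟨r, rfl⟩ := this
      exact h r
  intro i j hij
  simp only [Setoid.ker_def] at hij ⊢
  rw [hfirst i, hfirst j, firstIndex_congr hij]

end FirstIndex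

section PowDiffMatrix

open scoped Matrix

variable {R σ : Type*} [CommRing R] {M : ℕ}

lemma totalDegree_det_le_sum {ι : Type*} [Fintype ι] [DecidableEq ι]
    (A : Matrix ι ι (MvPolynomial σ R)) (b : ι → ℕ) (hA : ∀ r c, (A r c).totalDegree ≤ b c) :
    A.det.totalDegree ≤ ∑ c, b c := by
  rw [Matrix.det_apply]
  refine (totalDegree_finsetSum _ _).trans (Finset.sup_le fun τ _ => ?_)
  have hsign : (Equiv.Perm.sign τ • ∏ i, A (τ i) i).totalDegree ≤
      (∏ i, A (τ i) i).totalDegree := by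
    rcases Int.units_eq_one_or (Equiv.Perm.sign τ) with h | h <;> simp [h, totalDegree_neg]
  exact hsign.trans ((totalDegree_finsetProd _ _).trans (sum_le_sum fun i _ => hA (τ i) i))

lemma eval_eq_sum_coeff_succ {p : R[X]} (h0 : p.coeff 0 = 0) (hdeg : p.natDegree ≤ M) (t : R) :
    p.eval t = ∑ c : Fin M, p.coeff ((c : ℕ) + 1) * t ^ ((c : ℕ) + 1) := by
  rw [eval_eq_sum_range' (Nat.lt_succ_of_le hdeg), sum_range_succ', h0, zero_mul, add_zero,
    Fin.sum_univ_eq_sum_range (fun c => p.coeff (c + 1) * t ^ (c + 1))]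

noncomputable def powDiffMatrix (x y : Fin M → σ) : Matrix (Fin M) (Fin M) (MvPolynomial σ R) :=
  Matrix.of fun r c =>
    MvPolynomial.X (x r) ^ ((c : ℕ) + 1) - MvPolynomial.X (y r) ^ ((c : ℕ) + 1)

lemma det_powDiffMatrix_ne_zero [IsDomain R] {x y : Fin M → σ} (hx : Injective x)
    (hxy : ∀ r s, y r ≠ x s) : (powDiffMatrix (R := R) x y).det ≠ 0 := by
  classical
  -- killing the variables outside the range of `x` leaves `diag (X ∘ x) * vandermonde (X ∘ x)`
  let φ : MvPolynomial σ R →+* MvPolynomial σ R :=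
    (MvPolynomial.aeval fun s => if s ∈ Set.range x then MvPolynomial.X s else 0).toRingHom
  have hφ : (powDiffMatrix x y).map φ = Matrix.diagonal (fun r => MvPolynomial.X (x r)) *
      Matrix.vandermonde fun r => MvPolynomial.X (x r) := by
    ext r c
    have hy : ∀ s, x s ≠ y r := fun s hs => hxy r s hs.symm
    simp [powDiffMatrix, φ, hy, Matrix.vandermonde, pow_succ']
  intro h0
  have := RingHom.map_det φ (powDiffMatrix x y)
  rw [h0, map_zero, RingHom.mapMatrix_apply, hφ, Matrix.det_mul, Matrix.det_diagonal] at this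
  exact mul_ne_zero (prod_ne_zero_iff.2 fun r _ => MvPolynomial.X_ne_zero _)
    (Matrix.det_vandermonde_ne_zero_iff.2 (MvPolynomial.X_injective.comp hx)) this.symm

lemma totalDegree_det_powDiffMatrix_le [Nontrivial R] (x y : Fin M → σ) :
    (powDiffMatrix (R := R) x y).det.totalDegree ≤ ∑ c : Fin M, ((c : ℕ) + 1) :=
  totalDegree_det_le_sum _ _ fun r c => (totalDegree_sub _ _).trans (by simp)

lemma powDiffMatrix_map_eval_mulVec (x y : Fin M → σ) (α : σ → R) {p : R[X]}
    (h0 : p.coeff 0 = 0) (hdeg : p.natDegree ≤ M) :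
    ((powDiffMatrix x y).map (MvPolynomial.eval α)) *ᵥ (fun c => p.coeff ((c : ℕ) + 1)) =
      fun r => p.eval (α (x r)) - p.eval (α (y r)) := by
  ext r
  simp [Matrix.mulVec, dotProduct, powDiffMatrix, eval_eq_sum_coeff_succ h0 hdeg,
    ← sum_sub_distrib, sub_mul, mul_comm]

variable {x y : Fin M → σ}

lemma not_forall_eval_eq_of_det_ne_zero [IsDomain R] {α : σ → R}
    (hdet : ((powDiffMatrix x y).map (MvPolynomial.eval α)).det ≠ 0) {h : R[X]}
    (hmon : h.Monic) (hdeg : h.natDegree = M) (h0 : h.coeff 0 = 0) :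
    ¬ ∀ r, h.eval (α (x r)) = h.eval (α (y r)) := by
  intro hall
  have hM : M ≠ 0 := by
    rintro rfl
    rw [← hdeg, hmon.coeff_natDegree] at h0
    exact one_ne_zero h0
  refine hdet (Matrix.exists_mulVec_eq_zero_iff.1
    ⟨fun c => h.coeff ((c : ℕ) + 1), fun hz => ?_, ?_⟩)
  · have := congrFun hz ⟨M - 1, by omega⟩
    rw [Pi.zero_apply, Nat.sub_add_cancel (by omega), ← hdeg, hmon.coeff_natDegree] at this
    exact one_ne_zero this
  · rw [powDiffMatrix_map_eval_mulVec x y α h0 hdeg.le]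
    ext r
    simp [hall r]

lemma eq_of_forall_eval_eq_of_det_ne_zero [IsDomain R] {α : σ → R}
    (hdet : ((powDiffMatrix x y).map (MvPolynomial.eval α)).det ≠ 0) {h₁ h₂ : R[X]}
    (hmon₁ : h₁.Monic) (hmon₂ : h₂.Monic) (hdeg₁ : h₁.natDegree = M + 1)
    (hdeg₂ : h₂.natDegree = M + 1) (h0₁ : h₁.coeff 0 = 0) (h0₂ : h₂.coeff 0 = 0)
    (hall₁ : ∀ r, h₁.eval (α (x r)) = h₁.eval (α (y r)))
    (hall₂ : ∀ r, h₂.eval (α (x r)) = h₂.eval (α (y r))) : h₁ = h₂ := by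
  have hp0 : (h₁ - h₂).coeff 0 = 0 := by simp [h0₁, h0₂]
  have hpdeg : (h₁ - h₂).natDegree ≤ M := by
    refine natDegree_le_iff_coeff_eq_zero.2 fun N hN => ?_
    rcases Nat.lt_or_ge (M + 1) N with hlt | hle
    · rw [Polynomial.coeff_sub, coeff_eq_zero_of_natDegree_lt (hdeg₁ ▸ hlt),
        coeff_eq_zero_of_natDegree_lt (hdeg₂ ▸ hlt), sub_self]
    · obtain rfl : N = M + 1 := by omega
      rw [Polynomial.coeff_sub, ← hdeg₁, hmon₁.coeff_natDegree, hdeg₁, ← hdeg₂,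
        hmon₂.coeff_natDegree, sub_self]
  have hcoeff : (fun c : Fin M => (h₁ - h₂).coeff ((c : ℕ) + 1)) = 0 := by
    refine Matrix.eq_zero_of_mulVec_eq_zero hdet ?_
    rw [powDiffMatrix_map_eval_mulVec x y α hp0 hpdeg]
    ext r
    simp [hall₁ r, hall₂ r]
  refine sub_eq_zero.1 (Polynomial.ext fun N => ?_)
  rcases N with _ | N
  · exact hp0
  · by_cases hN : N < M
    · exact congrFun hcoeff ⟨N, hN⟩
    · exact coeff_eq_zero_of_natDegree_lt (by omega)

lemma existsUnique_forall_eval_eq_of_det_ne_zero {F : Type*} [Field F] {α : σ → F}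
    (hdet : ((powDiffMatrix x y).map (MvPolynomial.eval α)).det ≠ 0) :
    ∃! h : F[X], (h.Monic ∧ h.natDegree = M + 1 ∧ h.coeff 0 = 0) ∧
      ∀ r, h.eval (α (x r)) = h.eval (α (y r)) := by
  obtain ⟨u, hu⟩ := Matrix.mulVec_surjective_iff_isUnit.2
    ((Matrix.isUnit_iff_isUnit_det _).2 hdet.isUnit)
    (fun r => α (y r) ^ (M + 1) - α (x r) ^ (M + 1))
  set q : F[X] := ∑ c : Fin M, Polynomial.C (u c) * Polynomial.X ^ ((c : ℕ) + 1)
  have hq0 : q.coeff 0 = 0 := by simp [q]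
  have hqdeg : q.natDegree ≤ M :=
    natDegree_sum_le_of_forall_le _ _ fun c _ => (natDegree_C_mul_X_pow_le _ _).trans c.isLt
  have hqu : (fun c : Fin M => q.coeff ((c : ℕ) + 1)) = u := by
    ext c
    simp [q, Fin.val_inj]
  have hqeval := powDiffMatrix_map_eval_mulVec x y α hq0 hqdeg
  rw [hqu, hu] at hqeval
  have hmon : (Polynomial.X ^ (M + 1) + q).Monic :=
    monic_X_pow_add ((degree_le_of_natDegree_le hqdeg).trans_lt (by exact_mod_cast M.lt_succ_self))
  have hdeg : (Polynomial.X ^ (M + 1) + q).natDegree = M + 1 := by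
    rw [natDegree_add_eq_left_of_natDegree_lt (by rw [natDegree_X_pow]; omega), natDegree_X_pow]
  have h0 : (Polynomial.X ^ (M + 1) + q).coeff 0 = 0 := by simp [hq0]
  have hall : ∀ r, (Polynomial.X ^ (M + 1) + q).eval (α (x r)) =
      (Polynomial.X ^ (M + 1) + q).eval (α (y r)) := fun r => by
    simp only [Polynomial.eval_add, Polynomial.eval_pow, Polynomial.eval_X]
    linear_combination -congrFun hqeval r
  exact ⟨_, ⟨⟨hmon, hdeg, h0⟩, hall⟩, fun h ⟨⟨hmon', hdeg', h0'⟩, hall'⟩ =>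
    eq_of_forall_eval_eq_of_det_ne_zero hdet hmon' hmon hdeg' hdeg h0' h0 hall' hall⟩

end PowDiffMatrix

section BlockMatrix

variable (R : Type*) [CommRing R] {n : ℕ} {γ : Type*} [DecidableEq γ]

/-- The rows are the conditions `h (α i) = h (α (firstIndex f i))`, `i ∈ nonFirst f`, on the
coefficients of `h`, which say that `h ∘ α` is constant on the blocks of `f`. -/
noncomputable def blockMatrix (f : Fin n → γ) :
    Matrix (Fin #(nonFirst f)) (Fin #(nonFirst f)) (MvPolynomial (Fin n) R) :=
  powDiffMatrix (nonFirstEmb f) (firstIndex f ∘ nonFirstEmb f)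

lemma det_blockMatrix_ne_zero [IsDomain R] (f : Fin n → γ) : (blockMatrix R f).det ≠ 0 :=
  det_powDiffMatrix_ne_zero (nonFirstEmb f).injective (firstIndex_nonFirstEmb_ne f)

lemma two_mul_totalDegree_prod_det_blockMatrix_le [Nontrivial R] (n k : ℕ) :
    2 * (∏ f ∈ restrictedGrowth n k, (blockMatrix R f).det).totalDegree ≤
      stirling2 n k * ((n - k) * (n - k + 1)) := by
  have hf : ∀ f ∈ restrictedGrowth n k,
      2 * (blockMatrix R f).det.totalDegree ≤ (n - k) * (n - k + 1) := by
    intro f hf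
    have hsum := two_mul_sum_fin_val (#(nonFirst f) + 1)
    simp only [Fin.sum_univ_succ, Fin.val_zero, Fin.val_succ, zero_add, Nat.add_sub_cancel]
      at hsum
    rw [← card_nonFirst_of_mem_restrictedGrowth hf, mul_comm _ (_ + 1), ← hsum]
    exact Nat.mul_le_mul_left 2 (totalDegree_det_powDiffMatrix_le _ _)
  calc 2 * (∏ f ∈ restrictedGrowth n k, (blockMatrix R f).det).totalDegree
      ≤ ∑ f ∈ restrictedGrowth n k, 2 * (blockMatrix R f).det.totalDegree := by
        rw [← mul_sum]
        exact Nat.mul_le_mul_left 2 (totalDegree_finsetProd _ _)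
    _ ≤ _ := by
        rw [← card_restrictedGrowth, ← smul_eq_mul]
        exact sum_le_card_nsmul _ _ _ hf

variable {R}

lemma lt_card_image_eval_of_det_blockMatrix_ne_zero [IsDomain R] [DecidableEq R] {k : ℕ}
    {α : Fin n → R}
    (hdet : ∀ g ∈ restrictedGrowth n k, ((blockMatrix R g).map (MvPolynomial.eval α)).det ≠ 0)
    (hk : k ≤ n) {h : R[X]} (hmon : h.Monic) (hdeg : h.natDegree = n - k) (h0 : h.coeff 0 = 0) :
    k < #(univ.image fun i => h.eval (α i)) := by
  by_contra! hle
  obtain ⟨g, hg, hker⟩ := exists_mem_restrictedGrowth_setoidKer_le _ hle hk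
  rw [setoidKer_le_iff_forall_nonFirstEmb] at hker
  exact not_forall_eval_eq_of_det_ne_zero (hdet g hg) hmon
    (hdeg.trans (card_nonFirst_of_mem_restrictedGrowth hg).symm) h0 hker

lemma existsUnique_setoidKer_le_of_det_blockMatrix_ne_zero {F : Type*} [Field F]
    {f : Fin n → γ} {α : Fin n → F}
    (hdet : ((blockMatrix F f).map (MvPolynomial.eval α)).det ≠ 0) :
    ∃! h : F[X], (h.Monic ∧ h.natDegree = #(nonFirst f) + 1 ∧ h.coeff 0 = 0) ∧
      Setoid.ker f ≤ Setoid.ker fun i => h.eval (α i) := by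
  simp only [setoidKer_le_iff_forall_nonFirstEmb]
  exact existsUnique_forall_eval_eq_of_det_ne_zero hdet

end BlockMatrix

section GenericityPoly

variable (R : Type*) [CommRing R]

noncomputable def genericityPoly (N d : ℕ) : MvPolynomial (Fin N) R :=
  (Matrix.vandermonde MvPolynomial.X).det *
    (∏ f ∈ restrictedGrowth N d, (blockMatrix R f).det) *
      ∏ g ∈ restrictedGrowth N (d - 1), (blockMatrix R g).det

lemma genericityPoly_ne_zero [IsDomain R] (N d : ℕ) : genericityPoly R N d ≠ 0 :=
  mul_ne_zero (mul_ne_zero (Matrix.det_vandermonde_ne_zero_iff.2 MvPolynomial.X_injective)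
    (prod_ne_zero_iff.2 fun f _ => det_blockMatrix_ne_zero R f))
    (prod_ne_zero_iff.2 fun g _ => det_blockMatrix_ne_zero R g)

lemma two_mul_totalDegree_genericityPoly_le [Nontrivial R] (N d : ℕ) :
    2 * (genericityPoly R N d).totalDegree ≤ N * (N - 1) +
      stirling2 N d * ((N - d) * (N - d + 1)) +
        stirling2 N (d - 1) * ((N - (d - 1)) * (N - (d - 1) + 1)) := by
  have hV : 2 * (Matrix.vandermonde
      (MvPolynomial.X : Fin N → MvPolynomial (Fin N) R)).det.totalDegree ≤ N * (N - 1) := by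
    rw [← two_mul_sum_fin_val]
    exact Nat.mul_le_mul_left 2
      (totalDegree_det_le_sum _ _ fun r c => by simp [Matrix.vandermonde])
  have hP := two_mul_totalDegree_prod_det_blockMatrix_le R N d
  have hQ := two_mul_totalDegree_prod_det_blockMatrix_le R N (d - 1)
  rw [genericityPoly]
  refine (Nat.mul_le_mul_left 2 ((totalDegree_mul _ _).trans
    (Nat.add_le_add_right (totalDegree_mul _ _) _))).trans ?_
  omega

theorem totalDegree_genericityPoly_lt [Nontrivial R] {d e : ℕ} (hd : 2 ≤ d) (he : 2 ≤ e) :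
    (genericityPoly R (d + e - 1) d).totalDegree <
      e ^ 2 * (stirling2 (d + e - 1) (d - 1) + stirling2 (d + e - 1) d) := by
  have hdeg := two_mul_totalDegree_genericityPoly_le R (d + e - 1) d
  have hS := mul_pred_le_two_mul_stirling2 hd (show d < d + e - 1 by omega)
  have hN : 6 ≤ (d + e - 1) * (d + e - 1 - 1) :=
    Nat.mul_le_mul (show 3 ≤ d + e - 1 by omega) (show 2 ≤ d + e - 1 - 1 by omega)
  rw [show d + e - 1 - d = e - 1 by omega, show d + e - 1 - (d - 1) = e by omega] at hdeg
  generalize (genericityPoly R (d + e - 1) d).totalDegree = D at hdeg ⊢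
  generalize (d + e - 1) * (d + e - 1 - 1) = K at hdeg hS hN
  generalize stirling2 (d + e - 1) d = S₁ at hdeg hS ⊢
  generalize stirling2 (d + e - 1) (d - 1) = S₀ at hdeg ⊢
  obtain ⟨e, rfl⟩ : ∃ e', e = e' + 1 := ⟨e - 1, by omega⟩
  simp only [Nat.add_sub_cancel] at hdeg
  nlinarith [Nat.zero_le (S₀ * e), Nat.zero_le (S₀ * e * e), Nat.zero_le (S₁ * e * e)]

variable {R}

lemma injective_and_det_ne_zero_of_eval_genericityPoly_ne_zero [IsDomain R] {N d : ℕ}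
    {α : Fin N → R} (hα : MvPolynomial.eval α (genericityPoly R N d) ≠ 0) :
    Injective α ∧
      (∀ f ∈ restrictedGrowth N d, ((blockMatrix R f).map (MvPolynomial.eval α)).det ≠ 0) ∧
      ∀ g ∈ restrictedGrowth N (d - 1),
        ((blockMatrix R g).map (MvPolynomial.eval α)).det ≠ 0 := by
  have heval : ∀ {k} (A : Matrix (Fin k) (Fin k) (MvPolynomial (Fin N) R)),
      MvPolynomial.eval α A.det = (A.map (MvPolynomial.eval α)).det := fun A => by
    rw [RingHom.map_det, RingHom.mapMatrix_apply]
  rw [genericityPoly, map_mul, map_mul, map_prod, map_prod] at hα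
  obtain ⟨⟨hV, hP⟩, hQ⟩ := (mul_ne_zero_iff.1 hα).imp_left mul_ne_zero_iff.1
  have hvdm : (Matrix.vandermonde MvPolynomial.X).map (MvPolynomial.eval α) =
      Matrix.vandermonde α := by
    ext
    simp [Matrix.vandermonde]
  rw [heval, hvdm] at hV
  exact ⟨Matrix.det_vandermonde_ne_zero_iff.1 hV,
    fun f hf => heval _ ▸ prod_ne_zero_iff.1 hP f hf,
    fun g hg => heval _ ▸ prod_ne_zero_iff.1 hQ g hg⟩

end GenericityPoly

/-- There is a nonzero polynomial `R⁽²⁾` of total degree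
`< e² (S₂(d+e−1,d−1) + S₂(d+e−1,d))` such that whenever `R⁽²⁾(α) ≠ 0`:
(a) the set `C_α` of monic original degree-`e` polynomials taking at most `d`
distinct values on `α` is finite with exactly `S₂(d+e−1,d)` elements;
(b) every `h ∈ C_α` takes exactly `d` distinct values on `α`;
(c) the coordinates of `α` are pairwise distinct. -/
theorem exists_genericity_poly_R2 {F : Type*} [Field F] [DecidableEq F]
    (d e : ℕ) (hd : 2 ≤ d) (he : 2 ≤ e) :
    ∃ R : MvPolynomial (Fin (d + e - 1)) F,
      R ≠ 0 ∧
      R.totalDegree < e ^ 2 * (stirling2 (d + e - 1) (d - 1) + stirling2 (d + e - 1) d) ∧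
      ∀ α : Fin (d + e - 1) → F, MvPolynomial.eval α R ≠ 0 →
        (let Cα : Set (Polynomial F) :=
          {h | h.Monic ∧ h.natDegree = e ∧ h.coeff 0 = 0 ∧
            (Finset.univ.image fun i => h.eval (α i)).card ≤ d}
        Cα.Finite ∧ Cα.ncard = stirling2 (d + e - 1) d ∧
          (∀ h ∈ Cα, (Finset.univ.image fun i => h.eval (α i)).card = d)) ∧
        Function.Injective α := by
  refine ⟨genericityPoly F (d + e - 1) d, genericityPoly_ne_zero F _ d,
    totalDegree_genericityPoly_lt F hd he, fun α hα => ?_⟩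
  obtain ⟨hinj, hP, hQ⟩ := injective_and_det_ne_zero_of_eval_genericityPoly_ne_zero hα
  refine ⟨?_, hinj⟩
  intro Cα
  set H : Set F[X] := {h | h.Monic ∧ h.natDegree = e ∧ h.coeff 0 = 0}
  have hlow : ∀ h ∈ H, d ≤ #(univ.image fun i => h.eval (α i)) := fun h ⟨hmon, hdeg, h0⟩ =>
    Nat.le_of_pred_lt
      (lt_card_image_eval_of_det_blockMatrix_ne_zero hQ (by omega) hmon (by omega) h0)
  have huniq : ∀ f ∈ restrictedGrowth (d + e - 1) d,
      ∃! h, h ∈ H ∧ Setoid.ker f ≤ Setoid.ker fun i => h.eval (α i) := fun f hf => by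
    have := existsUnique_setoidKer_le_of_det_blockMatrix_ne_zero (hP f hf)
    rwa [card_nonFirst_of_mem_restrictedGrowth hf, show d + e - 1 - d + 1 = e by omega] at this
  have hC : Cα = {h | h ∈ H ∧ #(univ.image fun i => h.eval (α i)) ≤ d} := by
    ext h
    simp [Cα, H, and_assoc]
  obtain ⟨hfin, hcard⟩ := finite_and_ncard_eq_stirling2_of_existsUnique H _ hlow huniq
  exact ⟨hC ▸ hfin, hC ▸ hcard, fun h hh => le_antisymm (hC ▸ hh).2 (hlow h (hC ▸ hh).1)⟩
end

section
/- For integers d, e ≥ 2, the sum of Stirling numbers S₂(d+e−1, d−1) + S₂(d+e−1, d) is strictly less than the Bell number B_{d+e−1}, which in turn is strictly less than ((d+e−1)/ln(d+e))^{d+e−1}. Consequently, e²·(S₂(d+e−1,d−1)+S₂(d+e−1,d)) ≤ (d+e)^{d+e−1}. -/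
/-- The Bell number: the number of all set partitions of an `n`-element set,
i.e. the sum of the Stirling numbers of the second kind. -/
def bell (n : ℕ) : ℕ := ∑ m ∈ Finset.range (n + 1), stirling2 n m

open Finset

lemma stirling2_succ (n m : ℕ) :
    stirling2 (n+1) (m+1) = (m + 1) * stirling2 n (m + 1) + stirling2 n m := rfl

lemma stirling2_zero (n : ℕ) : stirling2 (n+1) 0 = 0 := rfl

lemma stirling2_eq_zero : ∀ {n m : ℕ}, n < m → stirling2 n m = 0
  | 0, m+1, _ => rfl
  | n+1, m+1, h => by
    rw [stirling2_succ, stirling2_eq_zero (by omega : n < m+1),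
      stirling2_eq_zero (by omega : n < m)]
    simp
  | _+1, 0, h => by omega

lemma stirling2_self : ∀ n, stirling2 n n = 1
  | 0 => rfl
  | n+1 => by
    rw [stirling2_succ, stirling2_self n, stirling2_eq_zero (by omega)]
    simp

lemma stirling2_one : ∀ n, stirling2 (n+1) 1 = 1
  | 0 => rfl
  | n+1 => by rw [stirling2_succ, stirling2_one n]; rfl

lemma stirling2_two : ∀ n, stirling2 (n+1) 2 + 1 = 2 ^ n
  | 0 => rfl
  | n+1 => by
    have h1 := stirling2_two n
    have h2 : stirling2 (n+1+1) 2 = 2 * stirling2 (n+1) 2 + stirling2 (n+1) 1 :=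
      stirling2_succ (n+1) 1
    rw [stirling2_one n] at h2
    rw [pow_succ]
    omega

lemma mul_descFactorial (k m : ℕ) :
    k * k.descFactorial m = k.descFactorial (m+1) + m * k.descFactorial m := by
  rcases le_or_gt m k with h | h
  · rw [Nat.descFactorial_succ]
    have : k = (k - m) + m := (Nat.sub_add_cancel h).symm
    nlinarith [this]
  · rw [Nat.descFactorial_eq_zero_iff_lt.mpr h,
      Nat.descFactorial_eq_zero_iff_lt.mpr (h.trans (Nat.lt_succ_self m))]
    simp

lemma pow_eq_sum_stirling2 (n k : ℕ) :
    k ^ n = ∑ m ∈ range (n+1), stirling2 n m * k.descFactorial m := by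
  induction n with
  | zero => simp [stirling2]
  | succ n ih =>
    have hB : ∑ m ∈ range (n+1), m * (stirling2 n m * k.descFactorial m)
        = ∑ m ∈ range (n+1), (m+1) * (stirling2 n (m+1) * k.descFactorial (m+1)) := by
      rw [Finset.sum_range_succ' (fun m => m * (stirling2 n m * k.descFactorial m)) n,
        Finset.sum_range_succ (fun m => (m+1) * (stirling2 n (m+1) * k.descFactorial (m+1))) n,
        stirling2_eq_zero (Nat.lt_succ_self n)]
      simp
    calc k ^ (n+1) = ∑ m ∈ range (n+1), stirling2 n m * k.descFactorial m * k := by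
          rw [← Finset.sum_mul, ← ih, pow_succ]
      _ = ∑ m ∈ range (n+1),
            (stirling2 n m * k.descFactorial (m+1) + m * (stirling2 n m * k.descFactorial m)) := by
          refine Finset.sum_congr rfl fun m _ => ?_
          rw [mul_assoc, mul_comm (Nat.descFactorial k m) k, mul_descFactorial]
          ring
      _ = (∑ m ∈ range (n+1), stirling2 n m * k.descFactorial (m+1))
            + ∑ m ∈ range (n+1), m * (stirling2 n m * k.descFactorial m) := by
          rw [Finset.sum_add_distrib]
      _ = ∑ m ∈ range (n+2), stirling2 (n+1) m * k.descFactorial m := by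
          rw [hB, Finset.sum_range_succ' (fun m => stirling2 (n+1) m * k.descFactorial m) (n+1),
            stirling2_zero]
          simp only [stirling2_succ, zero_mul, add_zero]
          rw [← Finset.sum_add_distrib]
          refine Finset.sum_congr rfl fun m _ => ?_
          ring

lemma part1 (d e : ℕ) (hd : 2 ≤ d) (he : 2 ≤ e) :
    stirling2 (d + e - 1) (d - 1) + stirling2 (d + e - 1) d < bell (d + e - 1) := by
  set n := d + e - 1 with hn
  have hdn : d < n := by omega
  have hsub : ({d-1, d, n} : Finset ℕ) ⊆ range (n+1) := by
    intro x hx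
    simp only [Finset.mem_insert, Finset.mem_singleton] at hx
    simp only [Finset.mem_range]
    omega
  have hle : ∑ m ∈ ({d-1, d, n} : Finset ℕ), stirling2 n m ≤ bell n :=
    Finset.sum_le_sum_of_subset hsub
  have hsum : ∑ m ∈ ({d-1, d, n} : Finset ℕ), stirling2 n m
      = stirling2 n (d-1) + stirling2 n d + 1 := by
    rw [Finset.sum_insert (by simp; omega), Finset.sum_insert (by simp; omega),
      Finset.sum_singleton, stirling2_self]
    ring
  omega

lemma aux_pow (e : ℕ) (he : 2 ≤ e) : e^2 * 2^e ≤ (e+2)^(e+1) := by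
  induction e, he using Nat.le_induction with
  | base => norm_num
  | succ n hn ih =>
    show (n+1)^2 * 2^(n+1) ≤ (n+3)^(n+2)
    have h1 : (n+3)^(n+2) = (n+3)^(n+1) * (n+3) := by ring
    have h2 : (n+2)^(n+1) * (n+3) ≤ (n+3)^(n+1) * (n+3) :=
      Nat.mul_le_mul_right _ (Nat.pow_le_pow_left (by omega) _)
    have h3 : n^2 * 2^n * (n+3) ≤ (n+2)^(n+1) * (n+3) := Nat.mul_le_mul_right _ ih
    have h4 : (n+1)^2 * 2^(n+1) ≤ n^2 * 2^n * (n+3) := by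
      have : 2 * (n+1)^2 ≤ n^2 * (n+3) := by nlinarith
      calc (n+1)^2 * 2^(n+1) = 2 * (n+1)^2 * 2^n := by ring
        _ ≤ n^2 * (n+3) * 2^n := Nat.mul_le_mul_right _ this
        _ = n^2 * 2^n * (n+3) := by ring
    omega

lemma part3 (d e : ℕ) (hd : 2 ≤ d) (he : 2 ≤ e) :
    e ^ 2 * (stirling2 (d + e - 1) (d - 1) + stirling2 (d + e - 1) d) ≤
      (d + e) ^ (d + e - 1) := by
  rcases eq_or_lt_of_le hd with hd2 | hd3
  · -- d = 2
    subst hd2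
    have h1 : 2 + e - 1 = e + 1 := by omega
    rw [h1, (by norm_num : 2 - 1 = 1), stirling2_one e]
    have h2 := stirling2_two e
    have h3 := aux_pow e he
    have h4 : e ^ 2 * (1 + stirling2 (e+1) 2) = e^2 * 2^e := by
      rw [show 1 + stirling2 (e+1) 2 = 2^e by omega]
    rw [h4, show 2 + e = e + 2 by ring, show e + 1 + 1 = e + 2 from rfl]
    calc e^2*2^e ≤ (e+2)^(e+1) := h3
      _ = (e+2)^(e+1) := rfl
  · -- 3 ≤ d
    have hd' : 3 ≤ d := hd3
    set n := d + e - 1 with hn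
    set s := d + e with hs
    have hdn : d ≤ n := by omega
    have key : s ^ n = ∑ m ∈ range (n+1), stirling2 n m * Nat.descFactorial s m :=
      pow_eq_sum_stirling2 n s
    have h1 : e^2 ≤ Nat.descFactorial s (d-1) := by
      have := Nat.pow_sub_le_descFactorial s (d-1)
      have he2 : s + 1 - (d-1) = e + 2 := by omega
      rw [he2] at this
      calc e^2 ≤ (e+2)^2 := Nat.pow_le_pow_left (by omega) _
        _ ≤ (e+2)^(d-1) := Nat.pow_le_pow_right (by omega) (by omega)
        _ ≤ _ := this
    have h2 : e^2 ≤ Nat.descFactorial s d := by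
      have := Nat.pow_sub_le_descFactorial s d
      have he2 : s + 1 - d = e + 1 := by omega
      rw [he2] at this
      calc e^2 ≤ (e+1)^2 := Nat.pow_le_pow_left (by omega) _
        _ ≤ (e+1)^d := Nat.pow_le_pow_right (by omega) (by omega)
        _ ≤ _ := this
    have hsub : ({d-1, d} : Finset ℕ) ⊆ range (n+1) := by
      intro x hx
      simp only [Finset.mem_insert, Finset.mem_singleton] at hx
      simp only [Finset.mem_range]
      omega
    have hpair : ∑ m ∈ ({d-1, d} : Finset ℕ), stirling2 n m * Nat.descFactorial s m
        ≤ s ^ n := key ▸ Finset.sum_le_sum_of_subset hsub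
    rw [Finset.sum_insert (by simp; omega), Finset.sum_singleton] at hpair
    calc e^2 * (stirling2 n (d-1) + stirling2 n d)
        = stirling2 n (d-1) * e^2 + stirling2 n d * e^2 := by ring
      _ ≤ stirling2 n (d-1) * Nat.descFactorial s (d-1)
            + stirling2 n d * Nat.descFactorial s d :=
          Nat.add_le_add (Nat.mul_le_mul_left _ h1) (Nat.mul_le_mul_left _ h2)
      _ ≤ s ^ n := hpair

lemma exp_one_eq : Real.exp 1 = ∑' k : ℕ, (1:ℝ) / (Nat.factorial k) := by
  rw [Real.exp_eq_exp_ℝ, NormedSpace.exp_eq_tsum_div]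
  simp

lemma summable_one_div_fac : Summable (fun k : ℕ => (1:ℝ) / (Nat.factorial k)) := by
  simpa using Real.summable_pow_div_factorial 1

lemma descFac_shift (m k : ℕ) :
    ((Nat.descFactorial (k+m) m : ℝ)) / (Nat.factorial (k+m)) = 1 / (Nat.factorial k) := by
  have hfac : (Nat.factorial k) * Nat.descFactorial (k+m) m = Nat.factorial (k+m) := by
    have h := Nat.factorial_mul_descFactorial (show m ≤ k + m by omega)
    simpa using h
  have h1 : (0:ℝ) < (Nat.factorial (k+m) : ℝ) := by positivity
  have h2 : (0:ℝ) < (Nat.factorial k : ℝ) := by positivity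
  rw [div_eq_div_iff (ne_of_gt h1) (ne_of_gt h2), one_mul]
  have h3 : Nat.descFactorial (k+m) m * Nat.factorial k = Nat.factorial (k+m) := by
    rw [mul_comm]; exact hfac
  exact_mod_cast h3

lemma summable_descFac (m : ℕ) :
    Summable (fun k : ℕ => (Nat.descFactorial k m : ℝ) / (Nat.factorial k)) := by
  refine (summable_nat_add_iff m).1 ?_
  exact summable_one_div_fac.congr fun k => (descFac_shift m k).symm

lemma tsum_descFac (m : ℕ) :
    ∑' k : ℕ, (Nat.descFactorial k m : ℝ) / (Nat.factorial k) = Real.exp 1 := by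
  have hf := summable_descFac m
  have h := Summable.sum_add_tsum_nat_add m hf
  have h0 : ∑ i ∈ range m, (Nat.descFactorial i m : ℝ) / (Nat.factorial i) = 0 := by
    refine Finset.sum_eq_zero fun i hi => ?_
    rw [Nat.descFactorial_eq_zero_iff_lt.2 (mem_range.1 hi)]
    simp
  have h1 : ∑' k : ℕ, (Nat.descFactorial (k+m) m : ℝ) / (Nat.factorial (k+m))
      = Real.exp 1 := by
    rw [tsum_congr (fun k => descFac_shift m k), exp_one_eq]
  rw [h0, zero_add, h1] at h
  exact h.symm

lemma dobinski (n : ℕ) :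
    Summable (fun k : ℕ => ((k:ℝ))^n / (Nat.factorial k)) ∧
    ∑' k : ℕ, ((k:ℝ))^n / (Nat.factorial k) = (bell n : ℝ) * Real.exp 1 := by
  have hfun : ∀ k : ℕ, ((k:ℝ))^n / (Nat.factorial k) = ∑ m ∈ range (n+1),
      (stirling2 n m : ℝ) * ((Nat.descFactorial k m : ℝ) / (Nat.factorial k)) := by
    intro k
    have h := pow_eq_sum_stirling2 n k
    have h2 : ((k:ℝ))^n = ∑ m ∈ range (n+1),
        (stirling2 n m : ℝ) * (Nat.descFactorial k m : ℝ) := by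
      exact_mod_cast congrArg (Nat.cast : ℕ → ℝ) h
    rw [h2, Finset.sum_div]
    exact Finset.sum_congr rfl fun m _ => (mul_div_assoc _ _ _)
  have hsummand : ∀ m ∈ range (n+1), Summable (fun k : ℕ =>
      (stirling2 n m : ℝ) * ((Nat.descFactorial k m : ℝ) / (Nat.factorial k))) :=
    fun m _ => (summable_descFac m).mul_left _
  constructor
  · exact (summable_sum hsummand).congr fun k => (hfun k).symm
  · rw [tsum_congr hfun, Summable.tsum_finsetSum hsummand]
    have : ∀ m ∈ range (n+1), ∑' k : ℕ,
        (stirling2 n m : ℝ) * ((Nat.descFactorial k m : ℝ) / (Nat.factorial k))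
        = (stirling2 n m : ℝ) * Real.exp 1 := by
      intro m _
      rw [tsum_mul_left, tsum_descFac]
    rw [Finset.sum_congr rfl this, ← Finset.sum_mul]
    congr 1
    rw [bell]
    push_cast
    rfl

lemma term_bound (n k : ℕ) (hn : 1 ≤ n) (hk : 1 ≤ k) :
    ((k:ℝ))^n ≤ ((n:ℝ) / Real.log ((n:ℝ)+1))^n * Real.exp (-(n:ℝ)) * ((n:ℝ)+1)^k := by
  set L := Real.log ((n:ℝ)+1) with hLdef
  have hn0 : (0:ℝ) < n := by exact_mod_cast hn
  have hL0 : 0 < L := Real.log_pos (by linarith)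
  set t := (n:ℝ)/L with htdef
  have ht0 : 0 < t := div_pos hn0 hL0
  have hk0 : (0:ℝ) < k := by exact_mod_cast hk
  have hx : (0:ℝ) < (k:ℝ) * L / n := by positivity
  have hlog := Real.log_le_sub_one_of_pos hx
  rw [Real.log_div (by positivity) (ne_of_gt hn0),
    Real.log_mul (ne_of_gt hk0) (ne_of_gt hL0)] at hlog
  have key : (n:ℝ) * Real.log k ≤ n * Real.log t - n + k * L := by
    have h2 : (n:ℝ) * (Real.log k + Real.log L - Real.log n)
        ≤ n * ((k:ℝ)*L/n - 1) := mul_le_mul_of_nonneg_left hlog (le_of_lt hn0)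
    have h3 : (n:ℝ) * ((k:ℝ)*L/n - 1) = k*L - n := by field_simp
    have h4 : Real.log t = Real.log n - Real.log L :=
      Real.log_div (ne_of_gt hn0) (ne_of_gt hL0)
    rw [h3] at h2
    rw [h4]
    nlinarith
  have lhs_eq : ((k:ℝ))^n = Real.exp ((n:ℝ) * Real.log k) := by
    rw [Real.exp_nat_mul, Real.exp_log hk0]
  have rhs_eq : t^n * Real.exp (-(n:ℝ)) * ((n:ℝ)+1)^k
      = Real.exp ((n:ℝ) * Real.log t - n + k * L) := by
    rw [show (n:ℝ) * Real.log t - n + k * L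
        = (n:ℝ) * Real.log t + (-(n:ℝ)) + (k:ℝ) * L by ring,
      Real.exp_add, Real.exp_add, Real.exp_nat_mul, Real.exp_nat_mul,
      Real.exp_log ht0, hLdef, Real.exp_log (by linarith)]
  rw [lhs_eq, rhs_eq]
  exact Real.exp_le_exp.2 key

set_option maxHeartbeats 1000000 in
lemma bell_lt_aux (n : ℕ) (hn : 1 ≤ n) :
    (bell n : ℝ) < ((n:ℝ) / Real.log ((n:ℝ)+1)) ^ n := by
  obtain ⟨hsumm, htsum⟩ := dobinski n
  set L := Real.log ((n:ℝ)+1) with hLdef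
  have hn0 : (0:ℝ) < n := by exact_mod_cast hn
  have hL0 : 0 < L := Real.log_pos (by linarith)
  set t := (n:ℝ)/L with htdef
  have ht0 : 0 < t := div_pos hn0 hL0
  set C := t^n * Real.exp (-(n:ℝ)) with hCdef
  have hC0 : 0 < C := by positivity
  have hsum1 : Summable (fun k : ℕ => (((k+1:ℕ)):ℝ)^n / (Nat.factorial (k+1))) :=
    (summable_nat_add_iff 1).2 hsumm
  have hsumN : Summable (fun k : ℕ => ((n:ℝ)+1)^(k+1) / (Nat.factorial (k+1))) :=
    (summable_nat_add_iff 1).2 (Real.summable_pow_div_factorial ((n:ℝ)+1))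
  have hsum2 : Summable (fun k : ℕ => C * (((n:ℝ)+1)^(k+1) / (Nat.factorial (k+1)))) :=
    hsumN.mul_left C
  have hle : ∑' k : ℕ, (((k+1:ℕ)):ℝ)^n / (Nat.factorial (k+1))
      ≤ ∑' k : ℕ, C * (((n:ℝ)+1)^(k+1) / (Nat.factorial (k+1))) := by
    refine Summable.tsum_le_tsum (fun k => ?_) hsum1 hsum2
    have hb := term_bound n (k+1) hn (by omega)
    rw [← hLdef, ← htdef] at hb
    have hfpos : (0:ℝ) < (Nat.factorial (k+1) : ℝ) := by positivity
    calc (((k+1:ℕ)):ℝ)^n / (Nat.factorial (k+1))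
        ≤ (C * ((n:ℝ)+1)^(k+1)) / (Nat.factorial (k+1)) := by
          refine (div_le_div_iff_of_pos_right hfpos).2 ?_
          rw [hCdef]
          exact hb
      _ = C * (((n:ℝ)+1)^(k+1) / (Nat.factorial (k+1))) := by ring
  have htail : ∑' k : ℕ, C * (((n:ℝ)+1)^(k+1) / (Nat.factorial (k+1)))
      = C * (Real.exp ((n:ℝ)+1) - 1) := by
    rw [tsum_mul_left]
    congr 1
    have hs := Real.summable_pow_div_factorial ((n:ℝ)+1)
    have h := Summable.sum_add_tsum_nat_add 1 hs
    have hexp : ∑' k : ℕ, ((n:ℝ)+1)^k / (Nat.factorial k) = Real.exp ((n:ℝ)+1) := by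
      rw [Real.exp_eq_exp_ℝ, NormedSpace.exp_eq_tsum_div]
    rw [hexp] at h
    have h0 : ∑ i ∈ range 1, ((n:ℝ)+1)^i / (Nat.factorial i) = 1 := by simp
    rw [h0] at h
    linarith
  have hzero := Summable.tsum_eq_zero_add hsumm
  have h00 : (((0:ℕ)):ℝ)^n / (Nat.factorial 0) = 0 := by
    rw [Nat.cast_zero, zero_pow (by omega : n ≠ 0)]
    simp
  rw [h00, zero_add] at hzero
  have hchain : (bell n : ℝ) * Real.exp 1 < t^n * Real.exp 1 := by
    calc (bell n : ℝ) * Real.exp 1 = ∑' k : ℕ, ((k:ℝ))^n / (Nat.factorial k) := htsum.symm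
      _ = ∑' k : ℕ, (((k+1:ℕ)):ℝ)^n / (Nat.factorial (k+1)) := hzero
      _ ≤ C * (Real.exp ((n:ℝ)+1) - 1) := htail ▸ hle
      _ < C * Real.exp ((n:ℝ)+1) := by
          refine mul_lt_mul_of_pos_left ?_ hC0
          linarith [Real.exp_pos ((n:ℝ)+1)]
      _ = t^n * Real.exp 1 := by
          rw [hCdef, mul_assoc, ← Real.exp_add]
          norm_num
  exact lt_of_mul_lt_mul_right hchain (le_of_lt (Real.exp_pos 1))

lemma part2 (d e : ℕ) (hd : 2 ≤ d) (he : 2 ≤ e) :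
    (bell (d + e - 1) : ℝ) <
      ((d + e - 1 : ℝ) / Real.log (d + e)) ^ (d + e - 1) := by
  have h := bell_lt_aux (d + e - 1) (by omega)
  have h1 : ((d + e - 1 : ℕ) : ℝ) = (d : ℝ) + e - 1 := by
    rw [Nat.cast_sub (by omega)]
    push_cast
    ring
  rw [h1] at h
  have h3 : (d:ℝ) + e - 1 + 1 = (d:ℝ) + e := by ring
  rw [h3] at h
  exact h


/-- `S₂(d+e−1,d−1) + S₂(d+e−1,d) < B_{d+e−1} < ((d+e−1)/ln(d+e))^{d+e−1}`, and
consequently `e²(S₂(d+e−1,d−1)+S₂(d+e−1,d)) ≤ (d+e)^{d+e−1}`. -/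
theorem stirling_sum_lt_bell_lt (d e : ℕ) (hd : 2 ≤ d) (he : 2 ≤ e) :
    stirling2 (d + e - 1) (d - 1) + stirling2 (d + e - 1) d < bell (d + e - 1) ∧
    (bell (d + e - 1) : ℝ) <
      ((d + e - 1 : ℝ) / Real.log (d + e)) ^ (d + e - 1) ∧
    e ^ 2 * (stirling2 (d + e - 1) (d - 1) + stirling2 (d + e - 1) d) ≤
      (d + e) ^ (d + e - 1) :=
  ⟨part1 d e hd he, part2 d e hd he, part3 d e hd he⟩
end

section
/- Let σ ∈ F̄[[X₁]] be a power series with m₁(X₁, σ) = 0, where m₁ ∈ F[X₁, T] is irreducible (as a polynomial in T over F(X₁)) with deg_T m₁ ≤ D and deg_{X₁} m₁ ≤ δ. Set N = 2Dδ and let σ_N be the truncation of σ modulo X₁^{N+1}. If p ∈ F[X₁, T] satisfies deg_{X₁} p ≤ δ, deg_T p ≤ D, and p(X₁, σ_N) ≡ 0 mod X₁^{N+1}, then m₁ divides p in F[X₁, T]. -/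
/-!
If `m₁ ∤ p`, Gauss's lemma and the irreducibility of `m₁` over `F(X₁)` make `m₁` and `p` coprime
there, so their resultant `r ∈ F[X₁]` is nonzero. Its Sylvester matrix has at most `2D` rows with
entries of `X₁`-degree at most `δ`, so `deg r ≤ 2Dδ = N`. On the other hand `r = a m₁ + b p` in
`F[X₁][T]`; substituting `T = σ` kills `m₁` and gives `r = b(σ) p(σ) ≡ 0 mod X₁^{N+1}`, because
`p(σ) ≡ p(σ_N)`. Hence `r = 0`, a contradiction.
-/

open Polynomial

theorem Matrix.natDegree_det_le {R n : Type*} [CommRing R] [Fintype n] [DecidableEq n]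
    (M : Matrix n n R[X]) {δ : ℕ} (hM : ∀ i j, (M i j).natDegree ≤ δ) :
    M.det.natDegree ≤ Fintype.card n * δ := by
  rw [Matrix.det_apply]
  refine natDegree_sum_le_of_forall_le _ _ fun σ _ => ?_
  refine (natDegree_smul_le _ _).trans <| (natDegree_prod_le _ _).trans ?_
  exact (Finset.sum_le_sum fun i _ => hM (σ i) i).trans (by simp)

namespace Polynomial

theorem natDegree_resultant_le {R : Type*} [CommRing R] {f g : R[X][X]} {δ : ℕ}
    (hf : ∀ i, (f.coeff i).natDegree ≤ δ) (hg : ∀ i, (g.coeff i).natDegree ≤ δ) (m n : ℕ) :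
    (resultant f g m n).natDegree ≤ (m + n) * δ := by
  simpa [resultant] using Matrix.natDegree_det_le (sylvester f g m n) fun i j => by
    induction j using Fin.addCases <;> simp only [sylvester, Matrix.of_apply, Fin.addCases_left,
      Fin.addCases_right] <;> split_ifs <;> simp [hf, hg]

theorem resultant_ne_zero_of_isCoprime_map {R K : Type*} [CommRing R] [Field K] {φ : R →+* K}
    (hφ : Function.Injective φ) {f g : R[X]} (h : IsCoprime (f.map φ) (g.map φ)) :
    resultant f g ≠ 0 := by
  simpa [natDegree_map_eq_of_injective hφ, map_ne_zero_iff _ hφ] using resultant_ne_zero _ _ h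

theorem eq_zero_of_X_pow_dvd_coe {R : Type*} [CommSemiring R] {q : R[X]} {n : ℕ}
    (hq : q.natDegree < n) (h : PowerSeries.X ^ n ∣ (q : PowerSeries R)) : q = 0 := by
  obtain ⟨g, hg⟩ := h
  rw [← PowerSeries.trunc_coe_eq_self hq, hg, PowerSeries.trunc_X_pow_self_mul]

end Polynomial

namespace PowerSeries

theorem X_pow_dvd_sub_trunc {R : Type*} [CommRing R] (n : ℕ) (σ : PowerSeries R) :
    X ^ n ∣ σ - ((trunc n σ : R[X]) : PowerSeries R) :=
  ⟨_, by rw [sub_eq_iff_eq_add]; exact eq_X_pow_mul_shift_add_trunc n σ⟩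

theorem X_pow_dvd_eval₂_of_X_pow_dvd_eval₂_trunc {A R : Type*} [CommRing A] [CommRing R]
    (ψ : A →+* R[X]) (p : A[X]) (σ : PowerSeries R) (n : ℕ)
    (h : Polynomial.X ^ n ∣ p.eval₂ ψ (trunc n σ)) :
    X ^ n ∣ p.eval₂ (Polynomial.coeToPowerSeries.ringHom.comp ψ) σ := by
  have hσ : X ^ n ∣ p.eval₂ (Polynomial.coeToPowerSeries.ringHom.comp ψ) σ -
      ((p.eval₂ ψ (trunc n σ) : R[X]) : PowerSeries R) := by
    rw [← Polynomial.coeToPowerSeries.ringHom_apply, hom_eval₂, ← eval_map, ← eval_map]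
    exact (X_pow_dvd_sub_trunc n σ).trans (sub_dvd_eval_sub _ _ _)
  have htrunc : X ^ n ∣ ((p.eval₂ ψ (trunc n σ) : R[X]) : PowerSeries R) := by
    simpa using map_dvd Polynomial.coeToPowerSeries.ringHom h
  simpa using dvd_add hσ htrunc

end PowerSeries

theorem min_poly_divides_of_truncated_root_general {F K : Type*} [Field F] [Field K]
    [Algebra F K] (D δ : ℕ)
    (m₁ p : Polynomial (Polynomial F)) (σ : PowerSeries K)
    (φ : Polynomial F →+* PowerSeries K)
    (hφ : φ = (PowerSeries.map (algebraMap F K)).comp Polynomial.coeToPowerSeries.ringHom)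
    (hprim : m₁.IsPrimitive)
    (hirr : Irreducible (m₁.map (algebraMap (Polynomial F) (RatFunc F))))
    (hm₁T : m₁.natDegree ≤ D) (hm₁X : ∀ i, (m₁.coeff i).natDegree ≤ δ)
    (hroot : Polynomial.eval₂ φ σ m₁ = 0)
    (hpX : ∀ i, (p.coeff i).natDegree ≤ δ) (hpT : p.natDegree ≤ D)
    (hcong : (Polynomial.X : Polynomial K) ^ (2 * D * δ + 1) ∣
      Polynomial.eval₂ (Polynomial.mapRingHom (algebraMap F K))
        (PowerSeries.trunc (2 * D * δ + 1) σ) p) :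
    m₁ ∣ p := by
  have hι : Function.Injective (algebraMap F[X] (RatFunc F)) := IsFractionRing.injective _ _
  replace hφ : φ = coeToPowerSeries.ringHom.comp (mapRingHom (algebraMap F K)) := by
    subst hφ; exact RingHom.ext fun q => by simp
  by_contra hndvd
  have hres : resultant m₁ p ≠ 0 := resultant_ne_zero_of_isCoprime_map hι <|
    hirr.coprime_iff_not_dvd.2 fun h => hndvd (hprim.dvd_of_fraction_map_dvd_fraction_map h)
  have hdeg : (resultant m₁ p).natDegree < 2 * D * δ + 1 :=
    Nat.lt_succ_of_le <| (natDegree_resultant_le hm₁X hpX _ _).trans <|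
      Nat.mul_le_mul_right δ (by omega)
  obtain ⟨a, b, -, -, hab⟩ := exists_mul_add_mul_eq_C_resultant m₁ p le_rfl le_rfl
    (Or.inl (by simpa [natDegree_map_eq_of_injective hι] using hirr.natDegree_pos.ne'))
  have hpσ := PowerSeries.X_pow_dvd_eval₂_of_X_pow_dvd_eval₂_trunc _ p σ _ hcong
  rw [← hφ] at hpσ
  have hresσ : PowerSeries.X ^ (2 * D * δ + 1) ∣ φ (resultant m₁ p) := by
    rw [← eval₂_C φ σ, ← hab, eval₂_add, eval₂_mul, eval₂_mul, hroot, zero_mul, zero_add]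
    exact hpσ.mul_right _
  rw [hφ, RingHom.comp_apply, coeToPowerSeries.ringHom_apply] at hresσ
  exact hres <| (Polynomial.map_eq_zero _).1 <|
    eq_zero_of_X_pow_dvd_coe (natDegree_map_le.trans_lt hdeg) hresσ

/-- If `σ ∈ F̄[[X₁]]` is a root of the primitive polynomial `m₁ ∈ F[X₁][T]`,
irreducible over `F(X₁)`, with `deg_T m₁ ≤ D`, `deg_{X₁} m₁ ≤ δ`, and
`p ∈ F[X₁][T]` with `deg_{X₁} p ≤ δ`, `deg_T p ≤ D` satisfies
`p(X₁, σ_N) ≡ 0 mod X₁^{N+1}` for the truncation `σ_N` of `σ` with `N = 2Dδ`,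
then `m₁` divides `p` in `F[X₁][T]`. -/
theorem min_poly_divides_of_truncated_root {F K : Type*} [Field F] [Field K]
    [Algebra F K] [IsAlgClosed K] (D δ : ℕ) (hD : 0 < D) (hδ : 0 < δ)
    (m₁ p : Polynomial (Polynomial F)) (σ : PowerSeries K)
    (φ : Polynomial F →+* PowerSeries K)
    (hφ : φ = (PowerSeries.map (algebraMap F K)).comp Polynomial.coeToPowerSeries.ringHom)
    (hprim : m₁.IsPrimitive)
    (hirr : Irreducible (m₁.map (algebraMap (Polynomial F) (RatFunc F))))
    (hm₁T : m₁.natDegree ≤ D) (hm₁X : ∀ i, (m₁.coeff i).natDegree ≤ δ)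
    (hroot : Polynomial.eval₂ φ σ m₁ = 0)
    (hpX : ∀ i, (p.coeff i).natDegree ≤ δ) (hpT : p.natDegree ≤ D)
    (hcong : (Polynomial.X : Polynomial K) ^ (2 * D * δ + 1) ∣
      Polynomial.eval₂ (Polynomial.mapRingHom (algebraMap F K))
        (PowerSeries.trunc (2 * D * δ + 1) σ) p) :
    m₁ ∣ p :=
  min_poly_divides_of_truncated_root_general D δ m₁ p σ φ hφ hprim hirr hm₁T hm₁X hroot hpX hpT
    hcong
end
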